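/- arXiv:2509.20930 — 10 statements merged into one kernel-verified Lean document; each statement's English description precedes it below -/
import Mathlib

section
/- Extensional learners over a symmetric monoidal category C form a category Learn_C: composition of equivalence classes of pairs (l : P ⊗ A → Q ⊗ B, r : Q ⊗ B' → P ⊗ A') is well-defined (independent of representatives), associative, and unital with identity (id_{I ⊗ A} | id_{I ⊗ A'}). -/
open CategoryTheory MonoidalCategory

universe v u

/-- A representative of an extensional learner `(A, A') ⇸ (B, B')`. -/
structure LearnerRep (C : Type u) [Category.{v} C] [MonoidalCategory C]
    (A A' B B' : C) where
  P : C
  Q : C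
  l : P ⊗ A ⟶ Q ⊗ B
  r : Q ⊗ B' ⟶ P ⊗ A'

variable {C : Type u} [Category.{v} C] [MonoidalCategory C]

/-- The generating (coend) relation on learner representatives: morphisms of
parameter objects may be slid between the two components. -/
inductive LearnStep {A A' B B' : C} :
    LearnerRep C A A' B B' → LearnerRep C A A' B B' → Prop
  | slideP {P₁ P₂ Q : C} (p : P₁ ⟶ P₂) (l : P₂ ⊗ A ⟶ Q ⊗ B) (r : Q ⊗ B' ⟶ P₁ ⊗ A') :
      LearnStep ⟨P₁, Q, (p ▷ A) ≫ l, r⟩ ⟨P₂, Q, l, r ≫ (p ▷ A')⟩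
  | slideQ {P Q₁ Q₂ : C} (q : Q₁ ⟶ Q₂) (l : P ⊗ A ⟶ Q₁ ⊗ B) (r : Q₂ ⊗ B' ⟶ P ⊗ A') :
      LearnStep ⟨P, Q₂, l ≫ (q ▷ B), r⟩ ⟨P, Q₁, l, (q ▷ B') ≫ r⟩

/-- Two representatives present the same extensional learner iff they are related
by the equivalence closure of the coend relation. -/
def LearnEquiv {A A' B B' : C} (f g : LearnerRep C A A' B B') : Prop :=
  Relation.EqvGen LearnStep f g

/-- The identity learner. -/
def idRep (A A' : C) : LearnerRep C A A' A A' :=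
  ⟨𝟙_ C, 𝟙_ C, 𝟙 (𝟙_ C ⊗ A), 𝟙 (𝟙_ C ⊗ A')⟩

variable [SymmetricCategory C]

/-- Composition of learner representatives. -/
def compRep {A A' B B' D D' : C} (f : LearnerRep C A A' B B')
    (g : LearnerRep C B B' D D') : LearnerRep C A A' D D' where
  P := g.P ⊗ f.P
  Q := g.Q ⊗ f.Q
  l := (α_ _ _ _).hom ≫ (g.P ◁ f.l) ≫ (α_ _ _ _).inv ≫ ((β_ g.P f.Q).hom ▷ B) ≫
    (α_ _ _ _).hom ≫ (f.Q ◁ g.l) ≫ (α_ _ _ _).inv ≫ ((β_ f.Q g.Q).hom ▷ D)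
  r := ((β_ g.Q f.Q).hom ▷ D') ≫ (α_ _ _ _).hom ≫ (f.Q ◁ g.r) ≫ (α_ _ _ _).inv ≫
    ((β_ f.Q g.P).hom ▷ B') ≫ (α_ _ _ _).hom ≫ (g.P ◁ f.r) ≫ (α_ _ _ _).inv

/-- The tensor product of learner representatives, for the tensor
`(A, A') ⊗ (B, B') = (A ⊗ B, B' ⊗ A')` on objects. -/
def tensorRep {AL AL' BL BL' AR AR' BR BR' : C}
    (f : LearnerRep C AL AL' BL BL') (g : LearnerRep C AR AR' BR BR') :
    LearnerRep C (AL ⊗ AR) (AR' ⊗ AL') (BL ⊗ BR) (BR' ⊗ BL') where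
  P := f.P ⊗ g.P
  Q := f.Q ⊗ g.Q
  l := tensorμ f.P g.P AL AR ≫ (f.l ⊗ₘ g.l) ≫ tensorμ f.Q BL g.Q BR
  r := ((β_ f.Q g.Q).hom ▷ (BR' ⊗ BL')) ≫ tensorμ g.Q f.Q BR' BL' ≫ (g.r ⊗ₘ f.r) ≫
    tensorμ g.P AR' f.P AL' ≫ ((β_ g.P f.P).hom ▷ (AR' ⊗ AL'))

/-- The involution on learner representatives: swap the two components. -/
def dualRep {A A' B B' : C} (f : LearnerRep C A A' B B') :
    LearnerRep C B' B A' A where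
  P := f.Q
  Q := f.P
  l := f.r
  r := f.l

/-- The inclusion `ι : C × Cᵒᵖ → Learn_C` on morphisms: a learner with trivial
parameter objects. -/
def iotaRep {A A' B B' : C} (f : A ⟶ B) (g : B' ⟶ A') : LearnerRep C A A' B B' :=
  ⟨𝟙_ C, 𝟙_ C, 𝟙_ C ◁ f, 𝟙_ C ◁ g⟩

/-- The cup `η_{(A,A')} : (I, I) ⇸ (A ⊗ A', A ⊗ A')`. -/
def cupRep (A A' : C) : LearnerRep C (𝟙_ C) (𝟙_ C) (A ⊗ A') (A ⊗ A') :=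
  ⟨A ⊗ A', 𝟙_ C, (ρ_ (A ⊗ A')).hom ≫ (λ_ (A ⊗ A')).inv,
    (λ_ (A ⊗ A')).hom ≫ (ρ_ (A ⊗ A')).inv⟩

/-- The cap `ε_{(A,A')} : (A' ⊗ A, A' ⊗ A) ⇸ (I, I)`. -/
def capRep (A A' : C) : LearnerRep C (A' ⊗ A) (A' ⊗ A) (𝟙_ C) (𝟙_ C) :=
  ⟨𝟙_ C, A' ⊗ A, (λ_ (A' ⊗ A)).hom ≫ (ρ_ (A' ⊗ A)).inv,
    (ρ_ (A' ⊗ A)).hom ≫ (λ_ (A' ⊗ A)).inv⟩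
/-- The snake composite
`(A,A') ⇸ ((A,A') ⊗ (A,A')*) ⊗ (A,A') ⇸ (A,A') ⊗ ((A,A')* ⊗ (A,A')) ⇸ (A,A')`,
built from the cup on the left and the cap on the right. -/
def snakeRep (A A' : C) : LearnerRep C A A' A A' :=
  compRep (compRep (compRep (compRep
    (iotaRep (λ_ A).inv (ρ_ A').hom)
    (tensorRep (cupRep A A') (idRep A A')))
    (iotaRep (α_ A A' A).hom (α_ A' A A').hom))
    (tensorRep (idRep A A') (capRep A A')))
    (iotaRep (ρ_ A).hom (λ_ A').inv)

/-- The other snake composite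
`(A,A') ⇸ (A,A') ⊗ ((A,A')* ⊗ (A,A')) ⇸ ((A,A') ⊗ (A,A')*) ⊗ (A,A') ⇸ (A,A')`,
built from the cup on the right and the cap on the left. -/
def snakeRep' (A A' : C) : LearnerRep C A A' A A' :=
  compRep (compRep (compRep (compRep
    (iotaRep (ρ_ A).inv (λ_ A').hom)
    (tensorRep (idRep A A') (cupRep A' A)))
    (iotaRep (α_ A A' A).inv (α_ A' A A').inv))
    (tensorRep (capRep A' A) (idRep A A')))
    (iotaRep (λ_ A).hom (ρ_ A').inv)

/-- Equality of morphisms in the category `Atemp_C` of atemporal learners: the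
monoidal congruence on `Learn_C` generated by identifying the snake composite
with the identity at every object. -/
inductive AtempRel : ∀ {A A' B B' : C},
    LearnerRep C A A' B B' → LearnerRep C A A' B B' → Prop
  | of {A A' B B' : C} {f g : LearnerRep C A A' B B'} :
      LearnEquiv f g → AtempRel f g
  | snake (A A' : C) : AtempRel (snakeRep A A') (idRep A A')
  | symm {A A' B B' : C} {f g : LearnerRep C A A' B B'} :
      AtempRel f g → AtempRel g f
  | trans {A A' B B' : C} {f g h : LearnerRep C A A' B B'} :
      AtempRel f g → AtempRel g h → AtempRel f h
  | comp_congr {A A' B B' D D' : C} {f f' : LearnerRep C A A' B B'}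
      {g g' : LearnerRep C B B' D D'} :
      AtempRel f f' → AtempRel g g' → AtempRel (compRep f g) (compRep f' g')
  | tensor_congr {AL AL' BL BL' AR AR' BR BR' : C}
      {f f' : LearnerRep C AL AL' BL BL'} {g g' : LearnerRep C AR AR' BR BR'} :
      AtempRel f f' → AtempRel g g' → AtempRel (tensorRep f g) (tensorRep f' g')


section LearnAux

open BraidedCategory

namespace LearnAux

variable {C : Type u} [Category.{v} C] [MonoidalCategory C]

theorem LE.rfl {A A' B B' : C} {f : LearnerRep C A A' B B'} : LearnEquiv f f :=
  Relation.EqvGen.refl f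

theorem LE.of_eq {A A' B B' : C} {f g : LearnerRep C A A' B B'} (h : f = g) :
    LearnEquiv f g := h ▸ LE.rfl

theorem LE.symm {A A' B B' : C} {f g : LearnerRep C A A' B B'} (h : LearnEquiv f g) :
    LearnEquiv g f := Relation.EqvGen.symm _ _ h

theorem LE.trans {A A' B B' : C} {f g h : LearnerRep C A A' B B'}
    (h1 : LearnEquiv f g) (h2 : LearnEquiv g h) : LearnEquiv f h :=
  Relation.EqvGen.trans _ _ _ h1 h2

theorem LE.step {A A' B B' : C} {f g : LearnerRep C A A' B B'} (h : LearnStep f g) :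
    LearnEquiv f g := Relation.EqvGen.rel _ _ h

/-- Slide an isomorphism of `P`-parameters. -/
theorem slideP_iso {A A' B B' P₁ P₂ Q : C} (p : P₁ ≅ P₂)
    (l : P₁ ⊗ A ⟶ Q ⊗ B) (r : Q ⊗ B' ⟶ P₁ ⊗ A') :
    LearnEquiv (⟨P₁, Q, l, r⟩ : LearnerRep C A A' B B')
      ⟨P₂, Q, (p.inv ▷ A) ≫ l, r ≫ (p.hom ▷ A')⟩ := by
  have := LE.step (LearnStep.slideP (A := A) (A' := A') p.hom ((p.inv ▷ A) ≫ l) r)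
  simpa using this

/-- Slide an isomorphism of `Q`-parameters. -/
theorem slideQ_iso {A A' B B' P Q₁ Q₂ : C} (q : Q₁ ≅ Q₂)
    (l : P ⊗ A ⟶ Q₁ ⊗ B) (r : Q₁ ⊗ B' ⟶ P ⊗ A') :
    LearnEquiv (⟨P, Q₁, l, r⟩ : LearnerRep C A A' B B')
      ⟨P, Q₂, l ≫ (q.hom ▷ B), (q.inv ▷ B') ≫ r⟩ := by
  have := LE.step (LearnStep.slideQ (A := A) (A' := A') q.hom l ((q.inv ▷ B') ≫ r))
  refine LE.symm ?_
  simpa using this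

variable [SymmetricCategory C]

/- Component equations for congruence of composition in the first argument. -/

theorem eqLP_l {A B D P₁ P₂ Q X Y : C} (p : P₁ ⟶ P₂) (l : P₂ ⊗ A ⟶ Q ⊗ B)
    (u : X ⊗ B ⟶ Y ⊗ D) :
    (α_ X P₁ A).hom ≫ (X ◁ ((p ▷ A) ≫ l)) ≫ (α_ X Q B).inv ≫ ((β_ X Q).hom ▷ B) ≫
      (α_ Q X B).hom ≫ (Q ◁ u) ≫ (α_ Q Y D).inv ≫ ((β_ Q Y).hom ▷ D) =
    ((X ◁ p) ▷ A) ≫ ((α_ X P₂ A).hom ≫ (X ◁ l) ≫ (α_ X Q B).inv ≫ ((β_ X Q).hom ▷ B) ≫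
      (α_ Q X B).hom ≫ (Q ◁ u) ≫ (α_ Q Y D).inv ≫ ((β_ Q Y).hom ▷ D)) := by
  monoidal

theorem eqLP_r {A' B' D' P₁ P₂ Q X Y : C} (p : P₁ ⟶ P₂) (r : Q ⊗ B' ⟶ P₁ ⊗ A')
    (v : Y ⊗ D' ⟶ X ⊗ B') :
    ((β_ Y Q).hom ▷ D') ≫ (α_ Q Y D').hom ≫ (Q ◁ v) ≫ (α_ Q X B').inv ≫
      ((β_ Q X).hom ▷ B') ≫ (α_ X Q B').hom ≫ (X ◁ (r ≫ (p ▷ A'))) ≫ (α_ X P₂ A').inv =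
    (((β_ Y Q).hom ▷ D') ≫ (α_ Q Y D').hom ≫ (Q ◁ v) ≫ (α_ Q X B').inv ≫
      ((β_ Q X).hom ▷ B') ≫ (α_ X Q B').hom ≫ (X ◁ r) ≫ (α_ X P₁ A').inv) ≫
      ((X ◁ p) ▷ A') := by
  monoidal

theorem eqLQ_l {A B D P X Y Q₁ Q₂ : C} (q : Q₁ ⟶ Q₂) (l : P ⊗ A ⟶ Q₁ ⊗ B)
    (u : X ⊗ B ⟶ Y ⊗ D) :
    (α_ X P A).hom ≫ (X ◁ (l ≫ (q ▷ B))) ≫ (α_ X Q₂ B).inv ≫ ((β_ X Q₂).hom ▷ B) ≫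
      (α_ Q₂ X B).hom ≫ (Q₂ ◁ u) ≫ (α_ Q₂ Y D).inv ≫ ((β_ Q₂ Y).hom ▷ D) =
    ((α_ X P A).hom ≫ (X ◁ l) ≫ (α_ X Q₁ B).inv ≫ ((β_ X Q₁).hom ▷ B) ≫
      (α_ Q₁ X B).hom ≫ (Q₁ ◁ u) ≫ (α_ Q₁ Y D).inv ≫ ((β_ Q₁ Y).hom ▷ D)) ≫
      ((Y ◁ q) ▷ D) := by
  calc
    _ = 𝟙 _ ⊗≫ X ◁ l ⊗≫ (X ◁ q ≫ (β_ X Q₂).hom) ▷ B ⊗≫ Q₂ ◁ u ⊗≫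
        (β_ Q₂ Y).hom ▷ D ⊗≫ 𝟙 _ := by monoidal
    _ = 𝟙 _ ⊗≫ X ◁ l ⊗≫ (β_ X Q₁).hom ▷ B ⊗≫ (q ▷ (X ⊗ B) ≫ Q₂ ◁ u) ⊗≫
        (β_ Q₂ Y).hom ▷ D ⊗≫ 𝟙 _ := by rw [braiding_naturality_right]; monoidal
    _ = 𝟙 _ ⊗≫ X ◁ l ⊗≫ (β_ X Q₁).hom ▷ B ⊗≫ Q₁ ◁ u ⊗≫
        ((q ▷ Y ≫ (β_ Q₂ Y).hom) ▷ D) ⊗≫ 𝟙 _ := by rw [← whisker_exchange]; monoidal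
    _ = _ := by rw [braiding_naturality_left]; monoidal

theorem eqLQ_r {A' B' D' P X Y Q₁ Q₂ : C} (q : Q₁ ⟶ Q₂) (r : Q₂ ⊗ B' ⟶ P ⊗ A')
    (v : Y ⊗ D' ⟶ X ⊗ B') :
    ((β_ Y Q₁).hom ▷ D') ≫ (α_ Q₁ Y D').hom ≫ (Q₁ ◁ v) ≫ (α_ Q₁ X B').inv ≫
      ((β_ Q₁ X).hom ▷ B') ≫ (α_ X Q₁ B').hom ≫ (X ◁ ((q ▷ B') ≫ r)) ≫ (α_ X P A').inv =
    ((Y ◁ q) ▷ D') ≫ (((β_ Y Q₂).hom ▷ D') ≫ (α_ Q₂ Y D').hom ≫ (Q₂ ◁ v) ≫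
      (α_ Q₂ X B').inv ≫ ((β_ Q₂ X).hom ▷ B') ≫ (α_ X Q₂ B').hom ≫ (X ◁ r) ≫
      (α_ X P A').inv) := by
  calc
    _ = 𝟙 _ ⊗≫ (β_ Y Q₁).hom ▷ D' ⊗≫ Q₁ ◁ v ⊗≫ ((q ▷ X ≫ (β_ Q₂ X).hom) ▷ B') ⊗≫
        X ◁ r ⊗≫ 𝟙 _ := by
      rw [braiding_naturality_left]; monoidal
    _ = 𝟙 _ ⊗≫ (β_ Y Q₁).hom ▷ D' ⊗≫ (q ▷ (Y ⊗ D') ≫ Q₂ ◁ v) ⊗≫ (β_ Q₂ X).hom ▷ B' ⊗≫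
        X ◁ r ⊗≫ 𝟙 _ := by rw [← whisker_exchange]; monoidal
    _ = 𝟙 _ ⊗≫ ((Y ◁ q ≫ (β_ Y Q₂).hom) ▷ D') ⊗≫ Q₂ ◁ v ⊗≫ (β_ Q₂ X).hom ▷ B' ⊗≫
        X ◁ r ⊗≫ 𝟙 _ := by rw [braiding_naturality_right]; monoidal
    _ = _ := by monoidal

/- Component equations for congruence of composition in the second argument. -/

theorem eqRP_l {A B D FP FQ Y P₁ P₂ : C} (p : P₁ ⟶ P₂) (u : P₂ ⊗ B ⟶ Y ⊗ D)
    (fl : FP ⊗ A ⟶ FQ ⊗ B) :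
    (α_ P₁ FP A).hom ≫ (P₁ ◁ fl) ≫ (α_ P₁ FQ B).inv ≫ ((β_ P₁ FQ).hom ▷ B) ≫
      (α_ FQ P₁ B).hom ≫ (FQ ◁ ((p ▷ B) ≫ u)) ≫ (α_ FQ Y D).inv ≫ ((β_ FQ Y).hom ▷ D) =
    ((p ▷ FP) ▷ A) ≫ ((α_ P₂ FP A).hom ≫ (P₂ ◁ fl) ≫ (α_ P₂ FQ B).inv ≫
      ((β_ P₂ FQ).hom ▷ B) ≫ (α_ FQ P₂ B).hom ≫ (FQ ◁ u) ≫ (α_ FQ Y D).inv ≫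
      ((β_ FQ Y).hom ▷ D)) := by
  calc
    _ = 𝟙 _ ⊗≫ P₁ ◁ fl ⊗≫ (((β_ P₁ FQ).hom ≫ FQ ◁ p) ▷ B) ⊗≫ FQ ◁ u ⊗≫
        (β_ FQ Y).hom ▷ D ⊗≫ 𝟙 _ := by monoidal
    _ = 𝟙 _ ⊗≫ (P₁ ◁ fl ≫ p ▷ (FQ ⊗ B)) ⊗≫ (β_ P₂ FQ).hom ▷ B ⊗≫ FQ ◁ u ⊗≫
        (β_ FQ Y).hom ▷ D ⊗≫ 𝟙 _ := by rw [← braiding_naturality_left]; monoidal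
    _ = _ := by rw [whisker_exchange]; monoidal

theorem eqRP_r {A' B' D' FP FQ Y P₁ P₂ : C} (p : P₁ ⟶ P₂) (v : Y ⊗ D' ⟶ P₁ ⊗ B')
    (fr : FQ ⊗ B' ⟶ FP ⊗ A') :
    ((β_ Y FQ).hom ▷ D') ≫ (α_ FQ Y D').hom ≫ (FQ ◁ (v ≫ (p ▷ B'))) ≫ (α_ FQ P₂ B').inv ≫
      ((β_ FQ P₂).hom ▷ B') ≫ (α_ P₂ FQ B').hom ≫ (P₂ ◁ fr) ≫ (α_ P₂ FP A').inv =
    (((β_ Y FQ).hom ▷ D') ≫ (α_ FQ Y D').hom ≫ (FQ ◁ v) ≫ (α_ FQ P₁ B').inv ≫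
      ((β_ FQ P₁).hom ▷ B') ≫ (α_ P₁ FQ B').hom ≫ (P₁ ◁ fr) ≫ (α_ P₁ FP A').inv) ≫
      ((p ▷ FP) ▷ A') := by
  calc
    _ = 𝟙 _ ⊗≫ (β_ Y FQ).hom ▷ D' ⊗≫ FQ ◁ v ⊗≫ ((FQ ◁ p ≫ (β_ FQ P₂).hom) ▷ B') ⊗≫
        P₂ ◁ fr ⊗≫ 𝟙 _ := by monoidal
    _ = 𝟙 _ ⊗≫ (β_ Y FQ).hom ▷ D' ⊗≫ FQ ◁ v ⊗≫ (β_ FQ P₁).hom ▷ B' ⊗≫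
        (p ▷ (FQ ⊗ B') ≫ P₂ ◁ fr) ⊗≫ 𝟙 _ := by rw [braiding_naturality_right]; monoidal
    _ = _ := by rw [← whisker_exchange]; monoidal

theorem eqRQ_l {A B D FP FQ PG Q₁ Q₂ : C} (q : Q₁ ⟶ Q₂) (u : PG ⊗ B ⟶ Q₁ ⊗ D)
    (fl : FP ⊗ A ⟶ FQ ⊗ B) :
    (α_ PG FP A).hom ≫ (PG ◁ fl) ≫ (α_ PG FQ B).inv ≫ ((β_ PG FQ).hom ▷ B) ≫
      (α_ FQ PG B).hom ≫ (FQ ◁ (u ≫ (q ▷ D))) ≫ (α_ FQ Q₂ D).inv ≫ ((β_ FQ Q₂).hom ▷ D) =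
    ((α_ PG FP A).hom ≫ (PG ◁ fl) ≫ (α_ PG FQ B).inv ≫ ((β_ PG FQ).hom ▷ B) ≫
      (α_ FQ PG B).hom ≫ (FQ ◁ u) ≫ (α_ FQ Q₁ D).inv ≫ ((β_ FQ Q₁).hom ▷ D)) ≫
      ((q ▷ FQ) ▷ D) := by
  calc
    _ = 𝟙 _ ⊗≫ PG ◁ fl ⊗≫ (β_ PG FQ).hom ▷ B ⊗≫ FQ ◁ u ⊗≫
        ((FQ ◁ q ≫ (β_ FQ Q₂).hom) ▷ D) ⊗≫ 𝟙 _ := by monoidal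
    _ = _ := by rw [braiding_naturality_right]; monoidal

theorem eqRQ_r {A' B' D' FP FQ PG Q₁ Q₂ : C} (q : Q₁ ⟶ Q₂) (v : Q₂ ⊗ D' ⟶ PG ⊗ B')
    (fr : FQ ⊗ B' ⟶ FP ⊗ A') :
    ((β_ Q₁ FQ).hom ▷ D') ≫ (α_ FQ Q₁ D').hom ≫ (FQ ◁ ((q ▷ D') ≫ v)) ≫ (α_ FQ PG B').inv ≫
      ((β_ FQ PG).hom ▷ B') ≫ (α_ PG FQ B').hom ≫ (PG ◁ fr) ≫ (α_ PG FP A').inv =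
    ((q ▷ FQ) ▷ D') ≫ (((β_ Q₂ FQ).hom ▷ D') ≫ (α_ FQ Q₂ D').hom ≫ (FQ ◁ v) ≫
      (α_ FQ PG B').inv ≫ ((β_ FQ PG).hom ▷ B') ≫ (α_ PG FQ B').hom ≫ (PG ◁ fr) ≫
      (α_ PG FP A').inv) := by
  calc
    _ = 𝟙 _ ⊗≫ ((q ▷ FQ ≫ (β_ Q₂ FQ).hom) ▷ D') ⊗≫ FQ ◁ v ⊗≫ (β_ FQ PG).hom ▷ B' ⊗≫
        PG ◁ fr ⊗≫ 𝟙 _ := by rw [braiding_naturality_left]; monoidal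
    _ = _ := by monoidal

/-- Composition respects a generating step in the first argument. -/
theorem stepL {A A' B B' D D' : C} {f f' : LearnerRep C A A' B B'}
    (g : LearnerRep C B B' D D') (h : LearnStep f f') :
    LearnEquiv (compRep f g) (compRep f' g) := by
  cases h with
  | slideP p l r =>
      dsimp only [compRep]
      rw [eqLP_l p l g.l, eqLP_r p r g.r]
      exact LE.step (LearnStep.slideP (g.P ◁ p) _ _)
  | slideQ q l r =>
      dsimp only [compRep]
      rw [eqLQ_l q l g.l, eqLQ_r q r g.r]
      exact LE.step (LearnStep.slideQ (g.Q ◁ q) _ _)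

/-- Composition respects a generating step in the second argument. -/
theorem stepR {A A' B B' D D' : C} (f : LearnerRep C A A' B B')
    {g g' : LearnerRep C B B' D D'} (h : LearnStep g g') :
    LearnEquiv (compRep f g) (compRep f g') := by
  cases h with
  | slideP p l r =>
      dsimp only [compRep]
      rw [eqRP_l p l f.l, eqRP_r p r f.r]
      exact LE.step (LearnStep.slideP (p ▷ f.P) _ _)
  | slideQ q l r =>
      dsimp only [compRep]
      rw [eqRQ_l q l f.l, eqRQ_r q r f.r]
      exact LE.step (LearnStep.slideQ (q ▷ f.Q) _ _)

theorem congrL {A A' B B' D D' : C} {f f' : LearnerRep C A A' B B'}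
    (h : LearnEquiv f f') (g : LearnerRep C B B' D D') :
    LearnEquiv (compRep f g) (compRep f' g) := by
  induction h with
  | rel _ _ h => exact stepL g h
  | refl _ => exact LE.rfl
  | symm _ _ _ ih => exact LE.symm ih
  | trans _ _ _ _ _ ih1 ih2 => exact LE.trans ih1 ih2

theorem congrR {A A' B B' D D' : C} (f : LearnerRep C A A' B B')
    {g g' : LearnerRep C B B' D D'} (h : LearnEquiv g g') :
    LearnEquiv (compRep f g) (compRep f g') := by
  induction h with
  | rel _ _ h => exact stepR f h
  | refl _ => exact LE.rfl
  | symm _ _ _ ih => exact LE.symm ih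
  | trans _ _ _ _ _ ih1 ih2 => exact LE.trans ih1 ih2

/-- Left unitality. -/
theorem id_comp {A A' B B' : C} (f : LearnerRep C A A' B B') :
    LearnEquiv (compRep (idRep A A') f) f := by
  obtain ⟨P, Q, l, r⟩ := f
  dsimp only [compRep, idRep]
  refine LE.trans (slideP_iso (ρ_ P) _ _)
    (LE.trans (slideQ_iso (ρ_ Q) _ _) (LE.of_eq ?_))
  congr 1
  · simp only [braiding_tensorUnit_right, braiding_tensorUnit_left]; monoidal
  · simp only [braiding_tensorUnit_right, braiding_tensorUnit_left]; monoidal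

/-- Right unitality. -/
theorem comp_id {A A' B B' : C} (f : LearnerRep C A A' B B') :
    LearnEquiv (compRep f (idRep B B')) f := by
  obtain ⟨P, Q, l, r⟩ := f
  dsimp only [compRep, idRep]
  refine LE.trans (slideP_iso (λ_ P) _ _)
    (LE.trans (slideQ_iso (λ_ Q) _ _) (LE.of_eq ?_))
  congr 1
  · simp only [braiding_tensorUnit_right, braiding_tensorUnit_left]; monoidal
  · simp only [braiding_tensorUnit_right, braiding_tensorUnit_left]; monoidal

/-- Associativity. -/
theorem comp_assoc {A A' B B' D D' E E' : C} (f : LearnerRep C A A' B B')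
    (g : LearnerRep C B B' D D') (h : LearnerRep C D D' E E') :
    LearnEquiv (compRep (compRep f g) h) (compRep f (compRep g h)) := by
  obtain ⟨FP, FQ, fl, fr⟩ := f
  obtain ⟨GP, GQ, gl, gr⟩ := g
  obtain ⟨HP, HQ, hl, hr⟩ := h
  dsimp only [compRep]
  refine LE.trans (slideP_iso (α_ HP GP FP).symm _ _)
    (LE.trans (slideQ_iso (α_ HQ GQ FQ).symm _ _) (LE.of_eq ?_))
  simp only [Iso.symm_hom, Iso.symm_inv]
  congr 1
  · calc
      _ = 𝟙 _ ⊗≫ ((HP ⊗ GP : C) ◁ fl) ⊗≫ (HP ◁ (β_ GP FQ).hom) ▷ B ⊗≫ HP ◁ FQ ◁ gl ⊗≫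
          (HP ◁ (β_ FQ GQ).hom ≫ (β_ HP (GQ ⊗ FQ)).hom) ▷ D ⊗≫ ((GQ ⊗ FQ : C) ◁ hl) ⊗≫
          (β_ (GQ ⊗ FQ) HQ).hom ▷ E ⊗≫ 𝟙 _ := by monoidal
      _ = 𝟙 _ ⊗≫ ((HP ⊗ GP : C) ◁ fl) ⊗≫ (HP ◁ (β_ GP FQ).hom) ▷ B ⊗≫ HP ◁ FQ ◁ gl ⊗≫
          (β_ HP (FQ ⊗ GQ)).hom ▷ D ⊗≫
          ((β_ FQ GQ).hom ▷ (HP ⊗ D) ≫ ((GQ ⊗ FQ : C) ◁ hl)) ⊗≫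
          (β_ (GQ ⊗ FQ) HQ).hom ▷ E ⊗≫ 𝟙 _ := by
        rw [braiding_naturality_right]; monoidal
      _ = 𝟙 _ ⊗≫ ((HP ⊗ GP : C) ◁ fl) ⊗≫ (HP ◁ (β_ GP FQ).hom) ▷ B ⊗≫ HP ◁ FQ ◁ gl ⊗≫
          (β_ HP (FQ ⊗ GQ)).hom ▷ D ⊗≫ ((FQ ⊗ GQ : C) ◁ hl) ⊗≫
          (((β_ FQ GQ).hom ▷ HQ ≫ (β_ (GQ ⊗ FQ) HQ).hom) ▷ E) ⊗≫ 𝟙 _ := by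
        rw [← whisker_exchange]; monoidal
      _ = 𝟙 _ ⊗≫ ((HP ⊗ GP : C) ◁ fl) ⊗≫ (HP ◁ (β_ GP FQ).hom) ▷ B ⊗≫
          (((HP ⊗ FQ : C) ◁ gl) ≫ (β_ HP FQ).hom ▷ (GQ ⊗ D)) ⊗≫
          FQ ◁ (β_ HP GQ).hom ▷ D ⊗≫ ((FQ ⊗ GQ : C) ◁ hl) ⊗≫
          (β_ (FQ ⊗ GQ) HQ).hom ▷ E ⊗≫ HQ ◁ (β_ FQ GQ).hom ▷ E ⊗≫ 𝟙 _ := by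
        rw [braiding_naturality_left, braiding_tensor_right_hom]; monoidal
      _ = _ := by
        rw [whisker_exchange]
        simp only [braiding_tensor_left_hom, braiding_tensor_right_hom]
        monoidal
  · calc
      _ = 𝟙 _ ⊗≫ (β_ HQ (GQ ⊗ FQ)).hom ▷ E' ⊗≫ ((GQ ⊗ FQ : C) ◁ hr) ⊗≫
          (((β_ (GQ ⊗ FQ) HP).hom ≫ HP ◁ (β_ GQ FQ).hom) ▷ D') ⊗≫ HP ◁ FQ ◁ gr ⊗≫
          HP ◁ (β_ FQ GP).hom ▷ B' ⊗≫ HP ◁ GP ◁ fr ⊗≫ 𝟙 _ := by monoidal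
      _ = 𝟙 _ ⊗≫ (β_ HQ (GQ ⊗ FQ)).hom ▷ E' ⊗≫
          (((GQ ⊗ FQ : C) ◁ hr) ≫ (β_ GQ FQ).hom ▷ (HP ⊗ D')) ⊗≫
          (β_ (FQ ⊗ GQ) HP).hom ▷ D' ⊗≫ HP ◁ FQ ◁ gr ⊗≫
          HP ◁ (β_ FQ GP).hom ▷ B' ⊗≫ HP ◁ GP ◁ fr ⊗≫ 𝟙 _ := by
        rw [← braiding_naturality_left]; monoidal
      _ = 𝟙 _ ⊗≫ (((β_ HQ (GQ ⊗ FQ)).hom ≫ (β_ GQ FQ).hom ▷ HQ) ▷ E') ⊗≫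
          ((FQ ⊗ GQ : C) ◁ hr) ⊗≫ (β_ (FQ ⊗ GQ) HP).hom ▷ D' ⊗≫ HP ◁ FQ ◁ gr ⊗≫
          HP ◁ (β_ FQ GP).hom ▷ B' ⊗≫ HP ◁ GP ◁ fr ⊗≫ 𝟙 _ := by
        rw [whisker_exchange]; monoidal
      _ = 𝟙 _ ⊗≫ (HQ ◁ (β_ GQ FQ).hom) ▷ E' ⊗≫ (β_ HQ (FQ ⊗ GQ)).hom ▷ E' ⊗≫
          ((FQ ⊗ GQ : C) ◁ hr) ⊗≫ (β_ (FQ ⊗ GQ) HP).hom ▷ D' ⊗≫ HP ◁ FQ ◁ gr ⊗≫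
          HP ◁ (β_ FQ GP).hom ▷ B' ⊗≫ HP ◁ GP ◁ fr ⊗≫ 𝟙 _ := by
        rw [← braiding_naturality_right]; monoidal
      _ = 𝟙 _ ⊗≫ (HQ ◁ (β_ GQ FQ).hom) ▷ E' ⊗≫ (β_ HQ (FQ ⊗ GQ)).hom ▷ E' ⊗≫
          ((FQ ⊗ GQ : C) ◁ hr) ⊗≫ FQ ◁ (β_ GQ HP).hom ▷ D' ⊗≫
          ((β_ FQ HP).hom ▷ (GQ ⊗ D') ≫ ((HP ⊗ FQ : C) ◁ gr)) ⊗≫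
          HP ◁ (β_ FQ GP).hom ▷ B' ⊗≫ HP ◁ GP ◁ fr ⊗≫ 𝟙 _ := by
        rw [braiding_tensor_left_hom]; monoidal
      _ = _ := by
        rw [← whisker_exchange]
        simp only [braiding_tensor_left_hom, braiding_tensor_right_hom]
        monoidal

end LearnAux

end LearnAux

/-- Extensional learners form a category: composition is well defined on
equivalence classes of representatives, unital and associative. -/
theorem learn_category (C : Type u) [Category.{v} C] [MonoidalCategory C]
    [SymmetricCategory C] :
    (∀ {A A' B B' D D' : C} (f f' : LearnerRep C A A' B B')
        (g g' : LearnerRep C B B' D D'),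
      LearnEquiv f f' → LearnEquiv g g' →
        LearnEquiv (compRep f g) (compRep f' g')) ∧
    (∀ {A A' B B' : C} (f : LearnerRep C A A' B B'),
      LearnEquiv (compRep (idRep A A') f) f ∧
      LearnEquiv (compRep f (idRep B B')) f) ∧
    (∀ {A A' B B' D D' E E' : C} (f : LearnerRep C A A' B B')
        (g : LearnerRep C B B' D D') (h : LearnerRep C D D' E E'),
      LearnEquiv (compRep (compRep f g) h) (compRep f (compRep g h))) := by
  open LearnAux in
  refine ⟨fun f f' g g' hf hg => LE.trans (congrL hf g) (congrR f' hg),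
    fun f => ⟨id_comp f, comp_id f⟩,
    fun f g h => comp_assoc f g h⟩
end

section
/- The assignment ι sending an object A of C to (A, I) and a morphism f : A → B to the learner (I ⊗ f, viewed as a map I ⊗ A → I ⊗ B | id_{I ⊗ I}) is a functor from C to Learn_C, and it is a symmetric monoidal functor. -/
open CategoryTheory MonoidalCategory

universe v u

variable {C : Type u} [Category.{v} C] [MonoidalCategory C]

variable [SymmetricCategory C]

/-- The structure morphism `ι A ⊗ ι B ⇸ ι (A ⊗ B)` of the inclusion
`ι : C → Learn_C`, `A ↦ (A, I)`, `f ↦ (I ⊗ f ∣ id)`. -/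
def iotaMu (A B : C) :
    LearnerRep C (A ⊗ B) (𝟙_ C ⊗ 𝟙_ C) (A ⊗ B) (𝟙_ C) :=
  iotaRep (𝟙 (A ⊗ B)) ((λ_ (𝟙_ C)).inv)

theorem learnEquiv_of_iso {C : Type u} [Category.{v} C] [MonoidalCategory C]
    {A A' B B' P₁ Q₁ P₂ Q₂ : C}
    (p : P₁ ≅ P₂) (q : Q₁ ≅ Q₂)
    (l₁ : P₁ ⊗ A ⟶ Q₁ ⊗ B) (r₁ : Q₁ ⊗ B' ⟶ P₁ ⊗ A')
    (l₂ : P₂ ⊗ A ⟶ Q₂ ⊗ B) (r₂ : Q₂ ⊗ B' ⟶ P₂ ⊗ A')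
    (hl : l₁ = (p.hom ▷ A) ≫ l₂ ≫ (q.inv ▷ B))
    (hr : r₁ = (q.hom ▷ B') ≫ r₂ ≫ (p.inv ▷ A')) :
    LearnEquiv (⟨P₁, Q₁, l₁, r₁⟩ : LearnerRep C A A' B B') ⟨P₂, Q₂, l₂, r₂⟩ := by
  subst hl hr
  refine Relation.EqvGen.trans _ ⟨P₂, Q₁, l₂ ≫ (q.inv ▷ B), (q.hom ▷ B') ≫ r₂⟩ _ ?_ ?_
  · apply Relation.EqvGen.rel
    have := LearnStep.slideP (A := A) (A' := A') (B := B) (B' := B')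
      p.hom (l₂ ≫ (q.inv ▷ B)) ((q.hom ▷ B') ≫ r₂ ≫ (p.inv ▷ A'))
    simpa using this
  · apply Relation.EqvGen.rel
    have := LearnStep.slideQ (A := A) (A' := A') (B := B) (B' := B')
      q.inv l₂ ((q.hom ▷ B') ≫ r₂)
    simpa using this

set_option maxHeartbeats 4000000

/-- The assignment `A ↦ (A, I)`, `f ↦ (I ⊗ f ∣ id)` is a symmetric monoidal
functor `ι : C → Learn_C`: it preserves identities and composition, and carries
invertible natural structure morphisms `μ` compatible with associativity, the
unitors and the symmetry. -/
theorem iota_symmetric_monoidal_functor (C : Type u) [Category.{v} C]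
    [MonoidalCategory C] [SymmetricCategory C] :
    -- functoriality
    (∀ A : C, LearnEquiv (iotaRep (𝟙 A) (𝟙 (𝟙_ C))) (idRep A (𝟙_ C))) ∧
    (∀ {A B D : C} (f : A ⟶ B) (g : B ⟶ D),
      LearnEquiv (iotaRep (f ≫ g) (𝟙 (𝟙_ C)))
        (compRep (iotaRep f (𝟙 (𝟙_ C))) (iotaRep g (𝟙 (𝟙_ C))))) ∧
    -- naturality of the structure morphisms μ
    (∀ {A B A₂ B₂ : C} (f : A ⟶ B) (f₂ : A₂ ⟶ B₂),
      LearnEquiv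
        (compRep (tensorRep (iotaRep f (𝟙 (𝟙_ C))) (iotaRep f₂ (𝟙 (𝟙_ C)))) (iotaMu B B₂))
        (compRep (iotaMu A A₂) (iotaRep (f ⊗ₘ f₂) (𝟙 (𝟙_ C))))) ∧
    -- the structure morphisms are invertible
    (∀ A B : C, ∃ w : LearnerRep C (A ⊗ B) (𝟙_ C) (A ⊗ B) (𝟙_ C ⊗ 𝟙_ C),
      LearnEquiv (compRep (iotaMu A B) w) (idRep (A ⊗ B) (𝟙_ C ⊗ 𝟙_ C)) ∧
      LearnEquiv (compRep w (iotaMu A B)) (idRep (A ⊗ B) (𝟙_ C))) ∧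
    -- associativity coherence
    (∀ A B D : C,
      LearnEquiv
        (compRep (compRep (tensorRep (iotaMu A B) (idRep D (𝟙_ C))) (iotaMu (A ⊗ B) D))
          (iotaRep (α_ A B D).hom (𝟙 (𝟙_ C))))
        (compRep (compRep
          (iotaRep (α_ A B D).hom ((α_ (𝟙_ C) (𝟙_ C) (𝟙_ C)).hom))
          (tensorRep (idRep A (𝟙_ C)) (iotaMu B D))) (iotaMu A (B ⊗ D)))) ∧
    -- unit coherence
    (∀ A : C,
      LearnEquiv (compRep (iotaMu A (𝟙_ C)) (iotaRep (ρ_ A).hom (𝟙 (𝟙_ C))))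
        (iotaRep (ρ_ A).hom ((λ_ (𝟙_ C)).inv)) ∧
      LearnEquiv (compRep (iotaMu (𝟙_ C) A) (iotaRep (λ_ A).hom (𝟙 (𝟙_ C))))
        (iotaRep (λ_ A).hom ((λ_ (𝟙_ C)).inv))) ∧
    -- compatibility with the symmetry
    (∀ A B : C,
      LearnEquiv
        (compRep (iotaMu A B) (iotaRep (β_ A B).hom (𝟙 (𝟙_ C))))
        (compRep (iotaRep (β_ A B).hom ((β_ (𝟙_ C) (𝟙_ C)).hom)) (iotaMu B A))) := by
  refine ⟨?_, ?_, ?_, ?_, ?_, ?_, ?_⟩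
  · intro A
    have : iotaRep (𝟙 A) (𝟙 (𝟙_ C)) = idRep A (𝟙_ C) := by simp [iotaRep, idRep]
    rw [this]; exact Relation.EqvGen.refl _
  · intro A B D f g
    apply learnEquiv_of_iso (λ_ (𝟙_ C)).symm (λ_ (𝟙_ C)).symm <;>
      simp [iotaRep, compRep] <;> monoidal
  · intro A B A₂ B₂ f f₂
    apply learnEquiv_of_iso (λ_ (𝟙_ C ⊗ 𝟙_ C)) (λ_ (𝟙_ C ⊗ 𝟙_ C)) <;>
      simp [iotaRep, iotaMu, compRep, tensorRep, tensorμ, MonoidalCategory.tensorHom_def] <;> monoidal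
  · intro A B
    refine ⟨iotaRep (𝟙 (A ⊗ B)) ((λ_ (𝟙_ C)).hom), ?_, ?_⟩ <;>
    · apply learnEquiv_of_iso (λ_ (𝟙_ C)) (λ_ (𝟙_ C)) <;>
        simp [iotaRep, iotaMu, compRep, idRep] <;> monoidal
  · intro A B D
    apply learnEquiv_of_iso (whiskerLeftIso (𝟙_ C) (α_ (𝟙_ C) (𝟙_ C) (𝟙_ C)).symm)
        (whiskerLeftIso (𝟙_ C) (α_ (𝟙_ C) (𝟙_ C) (𝟙_ C)).symm) <;>
    · simp only [iotaRep, iotaMu, compRep, tensorRep, idRep, tensorμ,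
        braiding_tensorUnit_left, braiding_tensorUnit_right, whiskerLeftIso_hom,
        whiskerLeftIso_inv, Iso.symm_hom, Iso.symm_inv]
      monoidal
  · intro A
    constructor <;>
    · apply learnEquiv_of_iso (λ_ (𝟙_ C)) (λ_ (𝟙_ C)) <;>
      · simp only [iotaRep, iotaMu, compRep, tensorRep, idRep, tensorμ,
          braiding_tensorUnit_left, braiding_tensorUnit_right]
        monoidal
  · intro A B
    apply learnEquiv_of_iso (Iso.refl _) (Iso.refl _) <;>
    · simp only [iotaRep, iotaMu, compRep, tensorRep, idRep, tensorμ,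
        braiding_tensorUnit_left, braiding_tensorUnit_right, Iso.refl_hom, Iso.refl_inv]
      monoidal
end

section
/- There is a functor from the category Optic_C of optics over C to Learn_C which sends an optic ⟨l : A → M ⊗ B | r : M ⊗ B' → A'⟩ : (A, A') ⇸ (B, B') to the learner with parameter objects P := I and Q := M, left component I ⊗ A → A → M ⊗ B and right component M ⊗ B' → A' → I ⊗ A'. This assignment is well-defined on the optic coend relation and preserves identities and composition. -/
open CategoryTheory MonoidalCategory

universe v u

variable {C : Type u} [Category.{v} C] [MonoidalCategory C]

variable [SymmetricCategory C]

/-- A representative of an optic `(A, A') ⇸ (B, B')`: a residual `M` with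
`l : A ⟶ M ⊗ B` and `r : M ⊗ B' ⟶ A'`. -/
structure OpticRep (C : Type u) [Category.{v} C] [MonoidalCategory C]
    (A A' B B' : C) where
  M : C
  l : A ⟶ M ⊗ B
  r : M ⊗ B' ⟶ A'

/-- The generating (coend) relation on optic representatives. -/
inductive OpticStep {A A' B B' : C} :
    OpticRep C A A' B B' → OpticRep C A A' B B' → Prop
  | slide {M₁ M₂ : C} (m : M₁ ⟶ M₂) (l : A ⟶ M₁ ⊗ B) (r : M₂ ⊗ B' ⟶ A') :
      OpticStep ⟨M₂, l ≫ (m ▷ B), r⟩ ⟨M₁, l, (m ▷ B') ≫ r⟩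

/-- Equivalence of optic representatives. -/
def OpticEquiv {A A' B B' : C} (o o' : OpticRep C A A' B B') : Prop :=
  Relation.EqvGen OpticStep o o'

/-- The identity optic. -/
def idOptic (A A' : C) : OpticRep C A A' A A' :=
  ⟨𝟙_ C, (λ_ A).inv, (λ_ A').hom⟩

/-- Composition of optic representatives. -/
def compOptic {A A' B B' D D' : C} (o₁ : OpticRep C A A' B B')
    (o₂ : OpticRep C B B' D D') : OpticRep C A A' D D' where
  M := o₁.M ⊗ o₂.M
  l := o₁.l ≫ (o₁.M ◁ o₂.l) ≫ (α_ _ _ _).inv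
  r := (α_ _ _ _).hom ≫ (o₁.M ◁ o₂.r) ≫ o₁.r

/-- The inclusion of optics into learners: trivial parameter `P := I` and
`Q := M`. -/
def opticToLearn {A A' B B' : C} (o : OpticRep C A A' B B') :
    LearnerRep C A A' B B' where
  P := 𝟙_ C
  Q := o.M
  l := (λ_ A).hom ≫ o.l
  r := o.r ≫ (λ_ A').inv


section Aux
variable {C : Type u} [Category.{v} C] [MonoidalCategory C]

lemma opticToLearn_step {A A' B B' : C} {o o' : OpticRep C A A' B B'}
    (h : OpticStep o o') : LearnStep (opticToLearn o) (opticToLearn o') := by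
  cases h with
  | slide m l r =>
      have := LearnStep.slideQ (A := A) (A' := A') (P := 𝟙_ C) m
        ((λ_ A).hom ≫ l) (r ≫ (λ_ A').inv)
      simpa [opticToLearn, Category.assoc] using this

lemma opticToLearn_id (A A' : C) :
    LearnEquiv (opticToLearn (idOptic A A')) (idRep A A') := by
  have : opticToLearn (idOptic A A') = idRep A A' := by
    simp [opticToLearn, idOptic, idRep]
  rw [this]
  exact Relation.EqvGen.refl _

variable [SymmetricCategory C]

lemma opticToLearn_comp {A A' B B' D D' : C} (o₁ : OpticRep C A A' B B')
    (o₂ : OpticRep C B B' D D') :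
    LearnEquiv (opticToLearn (compOptic o₁ o₂))
      (compRep (opticToLearn o₁) (opticToLearn o₂)) := by
  set X := opticToLearn (compOptic o₁ o₂)
  set Y := compRep (opticToLearn o₁) (opticToLearn o₂)
  -- intermediate representative
  set l₀ : (𝟙_ C ⊗ 𝟙_ C) ⊗ A ⟶ (o₁.M ⊗ o₂.M) ⊗ D :=
    ((λ_ (𝟙_ C)).hom ▷ A) ≫ X.l
  have h1 : LearnStep X ⟨𝟙_ C ⊗ 𝟙_ C, o₁.M ⊗ o₂.M, l₀, X.r ≫ ((λ_ (𝟙_ C)).inv ▷ A')⟩ := by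
    have := LearnStep.slideP (A := A) (A' := A') ((λ_ (𝟙_ C)).inv) l₀ X.r
    have e : (λ_ (𝟙_ C)).inv ▷ A ≫ l₀ = X.l := by
      simp only [l₀]
      erw [← comp_whiskerRight_assoc, Iso.inv_hom_id, id_whiskerRight, Category.id_comp]
    rw [e] at this
    exact this
  have h2 : LearnStep Y ⟨𝟙_ C ⊗ 𝟙_ C, o₁.M ⊗ o₂.M, l₀, X.r ≫ ((λ_ (𝟙_ C)).inv ▷ A')⟩ := by
    have hl : Y.l = l₀ ≫ ((β_ o₁.M o₂.M).hom ▷ D) := by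
      simp [Y, X, l₀, compRep, opticToLearn, compOptic,
        SymmetricCategory.braiding_swap_eq_inv_braiding]
    have hr : ((β_ o₁.M o₂.M).hom ▷ D') ≫ Y.r = X.r ≫ ((λ_ (𝟙_ C)).inv ▷ A') := by
      simp only [Y, X, compRep, opticToLearn, compOptic]
      rw [← comp_whiskerRight_assoc, SymmetricCategory.symmetry, id_whiskerRight,
        Category.id_comp]
      simp
    have hstep := LearnStep.slideQ (A := A) (A' := A') ((β_ o₁.M o₂.M).hom) l₀ Y.r
    erw [hr, ← hl] at hstep
    exact hstep
  exact Relation.EqvGen.trans _ _ _ (Relation.EqvGen.rel _ _ h1)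
    (Relation.EqvGen.symm _ _ (Relation.EqvGen.rel _ _ h2))

end Aux

/-- The inclusion of optics into learners is a well-defined functor
`Optic_C → Learn_C`. -/
theorem opticToLearn_functor (C : Type u) [Category.{v} C] [MonoidalCategory C]
    [SymmetricCategory C] :
    (∀ {A A' B B' : C} (o o' : OpticRep C A A' B B'),
      OpticEquiv o o' → LearnEquiv (opticToLearn o) (opticToLearn o')) ∧
    (∀ A A' : C, LearnEquiv (opticToLearn (idOptic A A')) (idRep A A')) ∧
    (∀ {A A' B B' D D' : C} (o₁ : OpticRep C A A' B B')
        (o₂ : OpticRep C B B' D D'),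
      LearnEquiv (opticToLearn (compOptic o₁ o₂))
        (compRep (opticToLearn o₁) (opticToLearn o₂))) := by
  refine ⟨fun o o' h => ?_, opticToLearn_id, fun o₁ o₂ => opticToLearn_comp o₁ o₂⟩
  induction h with
  | rel _ _ h => exact Relation.EqvGen.rel _ _ (opticToLearn_step h)
  | refl _ => exact Relation.EqvGen.refl _
  | symm _ _ _ ih => exact Relation.EqvGen.symm _ _ ih
  | trans _ _ _ _ _ ih₁ ih₂ => exact Relation.EqvGen.trans _ _ _ ih₁ ih₂
end

section
/- The assignment (A, A')* := (A', A) on objects and (l | r)* := (r | l) on morphisms defines a strict involutive symmetric monoidal functor (−)* : Learn_C → Learn_C^op; in particular ((A,A') ⊗ (B,B'))* = (B,B')* ⊗ (A,A')*, the functor preserves identities, composition (contravariantly), and tensor of morphisms, and (−)** is the identity functor. -/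
open CategoryTheory MonoidalCategory

universe v u

variable {C : Type u} [Category.{v} C] [MonoidalCategory C]

variable [SymmetricCategory C]

/-- The dual `(A, A')* := (A', A)` on objects of `Learn_C`. -/
def objDual (X : C × C) : C × C := (X.2, X.1)

/-- The tensor `(A, A') ⊗ (B, B') := (A ⊗ B, B' ⊗ A')` on objects of
`Learn_C`. -/
def objTensor (X Y : C × C) : C × C := (X.1 ⊗ Y.1, Y.2 ⊗ X.2)

/-- Two slides at once: sliding `p` on the parameter object of `l` and `q` on
the parameter object of `r` simultaneously. -/
lemma twoStep {A A' B B' : C} {P₁ P₂ Q₁ Q₂ : C} (p : P₁ ⟶ P₂) (q : Q₁ ⟶ Q₂)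
    (l : P₂ ⊗ A ⟶ Q₁ ⊗ B) (r : Q₂ ⊗ B' ⟶ P₁ ⊗ A')
    {lx : P₁ ⊗ A ⟶ Q₂ ⊗ B} {ry : Q₁ ⊗ B' ⟶ P₂ ⊗ A'}
    (hl : lx = (p ▷ A) ≫ l ≫ (q ▷ B))
    (hr : ry = (q ▷ B') ≫ r ≫ (p ▷ A')) :
    LearnEquiv (⟨P₁, Q₂, lx, r⟩ : LearnerRep C A A' B B') ⟨P₂, Q₁, l, ry⟩ := by
  subst hl hr
  exact Relation.EqvGen.trans _ _ _
    (Relation.EqvGen.rel _ _ (LearnStep.slideP p (l ≫ (q ▷ B)) r))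
    (Relation.EqvGen.rel _ _ (LearnStep.slideQ q l (r ≫ (p ▷ A'))))

/-- The involution `(A, A')* := (A', A)`, `(l ∣ r)* := (r ∣ l)` is a strict
involutive symmetric monoidal functor `Learn_C → Learn_Cᵒᵖ`: it is strictly
monoidal on objects, preserves identities, preserves composition
contravariantly, preserves the tensor of morphisms, and squares to the
identity. -/
theorem dual_strict_involution (C : Type u) [Category.{v} C]
    [MonoidalCategory C] [SymmetricCategory C] :
    -- strict monoidality on objects: ((A,A') ⊗ (B,B'))* = (B,B')* ⊗ (A,A')*
    (∀ X Y : C × C,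
      objDual (objTensor X Y) = objTensor (objDual Y) (objDual X)) ∧
    -- preservation of identities
    (∀ A A' : C, dualRep (idRep A A') = idRep A' A) ∧
    -- contravariant preservation of composition
    (∀ {A A' B B' D D' : C} (f : LearnerRep C A A' B B')
        (g : LearnerRep C B B' D D'),
      LearnEquiv (dualRep (compRep f g)) (compRep (dualRep g) (dualRep f))) ∧
    -- preservation of the tensor of morphisms
    (∀ {AL AL' BL BL' AR AR' BR BR' : C}
        (f : LearnerRep C AL AL' BL BL') (g : LearnerRep C AR AR' BR BR'),
      LearnEquiv (dualRep (tensorRep f g)) (tensorRep (dualRep g) (dualRep f))) ∧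
    -- involutivity: (−)** is the identity
    (∀ {A A' B B' : C} (f : LearnerRep C A A' B B'), dualRep (dualRep f) = f) := by
  refine ⟨fun X Y => rfl, fun A A' => rfl, fun {A A' B B' D D'} f g => ?_,
    fun {AL AL' BL BL' AR AR' BR BR'} f g => ?_, fun f => rfl⟩
  · exact twoStep (β_ g.Q f.Q).hom (β_ f.P g.P).hom
      (compRep (dualRep g) (dualRep f)).l (compRep f g).l
      (by simp [compRep, dualRep, ← comp_whiskerRight])
      (by simp [compRep, dualRep, ← comp_whiskerRight])
  · exact twoStep (β_ f.Q g.Q).hom (β_ g.P f.P).hom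
      (tensorRep (dualRep g) (dualRep f)).l (tensorRep f g).l
      (by simp [tensorRep, dualRep])
      (by simp [tensorRep, dualRep])
end

section
/- For a set-based learner (P, I, U, r) : (A, A') ⇸ (B, B'), the double dual learner (P**, I**, U**, r**) with P** = P × A × B', I**((p, p_a, p_{b'}), a) = I(U(p, p_a, p_{b'}), a), U**((p, p_a, p_{b'}), a, b') = (U(p, p_a, p_{b'}), a, b'), and r**((p, p_a, p_{b'}), a, b') = r(U(p, p_a, p_{b'}), a, b') is extensionally equivalent to (P, I, U, r), with witnessing map f := U : P × A × B' → P and diagonal filler Û := id. -/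
/-- A learner `(A, A') ⇸ (B, B')` in `Set`: a parameter set `P` with
implement `I : P × A → B`, update `U : P × A × B' → P` and
request `r : P × A × B' → A'`. -/
structure SetLearner4 (A A' B B' : Type u) where
  P : Type u
  I : P → A → B
  U : P → A → B' → P
  r : P → A → B' → A'

/-- Extensional equivalence of learners `(A, A') ⇸ (B, B')`. -/
def ExtEquiv4 {A A' B B' : Type u} (L L' : SetLearner4 A A' B B') : Prop :=
  ∃ (f : L.P → L'.P) (Uhat : L'.P → A → B' → L.P),
    (∀ p a, L'.I (f p) a = L.I p a) ∧
    (∀ p a b', L'.r (f p) a b' = L.r p a b') ∧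
    (∀ p a b', Uhat (f p) a b' = L.U p a b') ∧
    (∀ p' a b', L'.U p' a b' = f (Uhat p' a b'))

/-- The double dual of a learner: parameter set `P × A × B'`, which `runs one
training datum behind' the original learner. -/
def doubleDual {A A' B B' : Type u} (L : SetLearner4 A A' B B') :
    SetLearner4 A A' B B' where
  P := L.P × A × B'
  I := fun q a => L.I (L.U q.1 q.2.1 q.2.2) a
  U := fun q a b' => (L.U q.1 q.2.1 q.2.2, a, b')
  r := fun q a b' => L.r (L.U q.1 q.2.1 q.2.2) a b'

/-- The double dual learner is extensionally equivalent to the original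
learner, with witnessing map `f := U : P × A × B' → P` and diagonal filler
`Û := id`. -/
theorem doubleDual_extEquiv {A A' B B' : Type u} (L : SetLearner4 A A' B B') :
    (∀ q a, L.I ((fun q : L.P × A × B' => L.U q.1 q.2.1 q.2.2) q) a = (doubleDual L).I q a) ∧
    (∀ q a b', L.r ((fun q : L.P × A × B' => L.U q.1 q.2.1 q.2.2) q) a b' = (doubleDual L).r q a b') ∧
    (∀ q a b', (fun (p : L.P) (a : A) (b' : B') => (p, a, b') : L.P → A → B' → (doubleDual L).P)
        ((fun q : L.P × A × B' => L.U q.1 q.2.1 q.2.2) q) a b' = (doubleDual L).U q a b') ∧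
    (∀ p a b', L.U p a b' = (fun q : L.P × A × B' => L.U q.1 q.2.1 q.2.2) ((p, a, b') : L.P × A × B')) ∧
    ExtEquiv4 (doubleDual L) L := by
  refine ⟨fun q a => rfl, fun q a b' => rfl, fun q a b' => rfl, fun p a b' => rfl,
    ⟨fun q => L.U q.1 q.2.1 q.2.2, fun p a b' => (p, a, b'),
      fun p a => rfl, fun p a b' => rfl, fun p a b' => rfl, fun p' a b' => rfl⟩⟩
end

section
/- The cup η and cap ε in Learn_C are extranatural with respect to morphisms in the image of ι : C × C^op → Learn_C: for any morphisms f : A → B and g : B' → A' in C, composing η_{(A,A')} with (ι f ⊗ id) equals composing η_{(B,A')} appropriately, and dually for ε (i.e., the usual extranaturality squares for cup and cap commute for morphisms coming from C × C^op). -/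
open CategoryTheory MonoidalCategory

universe v u

variable {C : Type u} [Category.{v} C] [MonoidalCategory C]

variable [SymmetricCategory C]

section AuxSlide

variable [SymmetricCategory C]

private lemma learnEquiv_slide_left {A A' B B' : C} (F : LearnerRep C A A' B B') {P₂ : C}
    (p : F.P ⟶ P₂) (l : P₂ ⊗ A ⟶ F.Q ⊗ B) (hL : F.l = (p ▷ A) ≫ l) :
    LearnEquiv F ⟨P₂, F.Q, l, F.r ≫ (p ▷ A')⟩ := by
  obtain ⟨P, Q, L, R⟩ := F
  dsimp only at p l hL ⊢
  subst hL
  exact Relation.EqvGen.rel _ _ (LearnStep.slideP p l R)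

private lemma learnEquiv_slide_right {A A' B B' : C} (F : LearnerRep C A A' B B') {Q₁ : C}
    (q : Q₁ ⟶ F.Q) (l : F.P ⊗ A ⟶ Q₁ ⊗ B) (hL : F.l = l ≫ (q ▷ B)) :
    LearnEquiv F ⟨F.P, Q₁, l, (q ▷ B') ≫ F.r⟩ := by
  obtain ⟨P, Q, L, R⟩ := F
  dsimp only at q l hL ⊢
  subst hL
  exact Relation.EqvGen.rel _ _ (LearnStep.slideQ q l R)

end AuxSlide

set_option maxHeartbeats 1000000 in
/-- The cup and cap of `Learn_C` are extranatural with respect to morphisms in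
the image of `ι : C × Cᵒᵖ → Learn_C`: for `f : A ⟶ B` and `g : B' ⟶ A'` in `C`,
the usual extranaturality squares for the cup and the cap commute. -/
theorem cup_cap_extranatural_iota (C : Type u) [Category.{v} C]
    [MonoidalCategory C] [SymmetricCategory C]
    {A A' B B' : C} (f : A ⟶ B) (g : B' ⟶ A') :
    LearnEquiv
      (compRep (cupRep A A') (tensorRep (iotaRep f g) (idRep A' A)))
      (compRep (cupRep B B') (tensorRep (idRep B B') (dualRep (iotaRep f g)))) ∧
    LearnEquiv
      (compRep (tensorRep (dualRep (iotaRep f g)) (idRep A A')) (capRep A A'))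
      (compRep (tensorRep (idRep B' B) (iotaRep f g)) (capRep B B')) := by
  constructor
  · -- the cup square
    have hl1 : (compRep (cupRep A A') (tensorRep (iotaRep f g) (idRep A' A))).l =
        ((((𝟙_ C ⊗ 𝟙_ C) ◁ (f ▷ A')) ▷ 𝟙_ C)) ≫ ((ρ_ ((𝟙_ C ⊗ 𝟙_ C) ⊗ (B ⊗ A'))).hom ≫ ((ρ_ (𝟙_ C ⊗ 𝟙_ C)).inv ▷ (B ⊗ A'))) := by
      simp only [compRep, tensorRep, iotaRep, idRep, cupRep, tensorμ,
        BraidedCategory.braiding_tensor_left_hom, BraidedCategory.braiding_tensor_right_hom,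
        braiding_tensorUnit_left, braiding_tensorUnit_right]
      monoidal
    have hl2 : (compRep (cupRep B B') (tensorRep (idRep B B') (dualRep (iotaRep f g)))).l =
        ((((𝟙_ C ⊗ 𝟙_ C) ◁ (B ◁ g)) ▷ 𝟙_ C)) ≫ ((ρ_ ((𝟙_ C ⊗ 𝟙_ C) ⊗ (B ⊗ A'))).hom ≫ ((ρ_ (𝟙_ C ⊗ 𝟙_ C)).inv ▷ (B ⊗ A'))) := by
      simp only [compRep, tensorRep, iotaRep, idRep, dualRep, cupRep, tensorμ,
        BraidedCategory.braiding_tensor_left_hom, BraidedCategory.braiding_tensor_right_hom,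
        braiding_tensorUnit_left, braiding_tensorUnit_right]
      monoidal
    have hr1 : (compRep (cupRep A A') (tensorRep (iotaRep f g) (idRep A' A))).r ≫
        ((((𝟙_ C ⊗ 𝟙_ C) ◁ (f ▷ A')) ▷ 𝟙_ C)) = (((((𝟙_ C ⊗ 𝟙_ C) ⊗ 𝟙_ C) ◁ (f ⊗ₘ g)) : _ ⟶ ((𝟙_ C ⊗ 𝟙_ C) ⊗ 𝟙_ C) ⊗ (B ⊗ A')) ≫ ((ρ_ (𝟙_ C ⊗ 𝟙_ C)).hom ▷ (B ⊗ A')) ≫ (ρ_ ((𝟙_ C ⊗ 𝟙_ C) ⊗ (B ⊗ A'))).inv) := by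
      simp only [compRep, tensorRep, iotaRep, idRep, dualRep, cupRep, tensorμ,
        tensorHom_def',
        BraidedCategory.braiding_tensor_left_hom, BraidedCategory.braiding_tensor_right_hom,
        braiding_tensorUnit_left, braiding_tensorUnit_right]
      monoidal
    have hr2 : (compRep (cupRep B B') (tensorRep (idRep B B') (dualRep (iotaRep f g)))).r ≫
        ((((𝟙_ C ⊗ 𝟙_ C) ◁ (B ◁ g)) ▷ 𝟙_ C)) = (((((𝟙_ C ⊗ 𝟙_ C) ⊗ 𝟙_ C) ◁ (f ⊗ₘ g)) : _ ⟶ ((𝟙_ C ⊗ 𝟙_ C) ⊗ 𝟙_ C) ⊗ (B ⊗ A')) ≫ ((ρ_ (𝟙_ C ⊗ 𝟙_ C)).hom ▷ (B ⊗ A')) ≫ (ρ_ ((𝟙_ C ⊗ 𝟙_ C) ⊗ (B ⊗ A'))).inv) := by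
      simp only [compRep, tensorRep, iotaRep, idRep, dualRep, cupRep, tensorμ,
        MonoidalCategory.tensorHom_def,
        BraidedCategory.braiding_tensor_left_hom, BraidedCategory.braiding_tensor_right_hom,
        braiding_tensorUnit_left, braiding_tensorUnit_right]
      monoidal
    have h1 : LearnEquiv (compRep (cupRep A A') (tensorRep (iotaRep f g) (idRep A' A)))
        ⟨(𝟙_ C ⊗ 𝟙_ C) ⊗ (B ⊗ A'), (𝟙_ C ⊗ 𝟙_ C) ⊗ 𝟙_ C, ((ρ_ ((𝟙_ C ⊗ 𝟙_ C) ⊗ (B ⊗ A'))).hom ≫ ((ρ_ (𝟙_ C ⊗ 𝟙_ C)).inv ▷ (B ⊗ A'))),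
          (compRep (cupRep A A') (tensorRep (iotaRep f g) (idRep A' A))).r ≫ ((((𝟙_ C ⊗ 𝟙_ C) ◁ (f ▷ A')) ▷ 𝟙_ C))⟩ :=
      learnEquiv_slide_left _ _ _ hl1
    have h2 : LearnEquiv (compRep (cupRep B B') (tensorRep (idRep B B') (dualRep (iotaRep f g))))
        ⟨(𝟙_ C ⊗ 𝟙_ C) ⊗ (B ⊗ A'), (𝟙_ C ⊗ 𝟙_ C) ⊗ 𝟙_ C, ((ρ_ ((𝟙_ C ⊗ 𝟙_ C) ⊗ (B ⊗ A'))).hom ≫ ((ρ_ (𝟙_ C ⊗ 𝟙_ C)).inv ▷ (B ⊗ A'))),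
          (compRep (cupRep B B') (tensorRep (idRep B B') (dualRep (iotaRep f g)))).r ≫ ((((𝟙_ C ⊗ 𝟙_ C) ◁ (B ◁ g)) ▷ 𝟙_ C))⟩ :=
      learnEquiv_slide_left _ _ _ hl2
    erw [hr1] at h1
    erw [hr2] at h2
    exact Relation.EqvGen.trans _ _ _ h1 (Relation.EqvGen.symm _ _ h2)
  · -- the cap square
    have hl1 : (compRep (tensorRep (dualRep (iotaRep f g)) (idRep A A')) (capRep A A')).l =
        (((λ_ (𝟙_ C ⊗ 𝟙_ C)).hom ▷ (B' ⊗ A)) ≫ (β_ (𝟙_ C ⊗ 𝟙_ C) (B' ⊗ A)).hom ≫ (ρ_ ((B' ⊗ A) ⊗ (𝟙_ C ⊗ 𝟙_ C))).inv) ≫ ((((g ▷ A) ▷ (𝟙_ C ⊗ 𝟙_ C)) ▷ 𝟙_ C)) := by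
      simp only [compRep, tensorRep, iotaRep, idRep, dualRep, capRep, tensorμ,
        BraidedCategory.braiding_tensor_left_hom, BraidedCategory.braiding_tensor_right_hom,
        braiding_tensorUnit_left, braiding_tensorUnit_right]
      monoidal
    have hl2 : (compRep (tensorRep (idRep B' B) (iotaRep f g)) (capRep B B')).l =
        (((λ_ (𝟙_ C ⊗ 𝟙_ C)).hom ▷ (B' ⊗ A)) ≫ (β_ (𝟙_ C ⊗ 𝟙_ C) (B' ⊗ A)).hom ≫ (ρ_ ((B' ⊗ A) ⊗ (𝟙_ C ⊗ 𝟙_ C))).inv) ≫ ((((B' ◁ f) ▷ (𝟙_ C ⊗ 𝟙_ C)) ▷ 𝟙_ C)) := by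
      simp only [compRep, tensorRep, iotaRep, idRep, dualRep, capRep, tensorμ,
        BraidedCategory.braiding_tensor_left_hom, BraidedCategory.braiding_tensor_right_hom,
        braiding_tensorUnit_left, braiding_tensorUnit_right]
      monoidal
    have hr1 : ((((g ▷ A) ▷ (𝟙_ C ⊗ 𝟙_ C)) ▷ 𝟙_ C)) ≫
        (compRep (tensorRep (dualRep (iotaRep f g)) (idRep A A')) (capRep A A')).r = ((ρ_ ((B' ⊗ A) ⊗ (𝟙_ C ⊗ 𝟙_ C))).hom ≫ (β_ (B' ⊗ A) (𝟙_ C ⊗ 𝟙_ C)).hom ≫ ((λ_ (𝟙_ C ⊗ 𝟙_ C)).inv ▷ (B' ⊗ A)) ≫ ((𝟙_ C ⊗ (𝟙_ C ⊗ 𝟙_ C)) ◁ ((g ⊗ₘ f : B' ⊗ A ⟶ A' ⊗ B)))) := by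
      simp only [compRep, tensorRep, iotaRep, idRep, dualRep, capRep, tensorμ,
        MonoidalCategory.tensorHom_def,
        BraidedCategory.braiding_tensor_left_hom, BraidedCategory.braiding_tensor_right_hom,
        braiding_tensorUnit_left, braiding_tensorUnit_right]
      monoidal
    have hr2 : ((((B' ◁ f) ▷ (𝟙_ C ⊗ 𝟙_ C)) ▷ 𝟙_ C)) ≫
        (compRep (tensorRep (idRep B' B) (iotaRep f g)) (capRep B B')).r = ((ρ_ ((B' ⊗ A) ⊗ (𝟙_ C ⊗ 𝟙_ C))).hom ≫ (β_ (B' ⊗ A) (𝟙_ C ⊗ 𝟙_ C)).hom ≫ ((λ_ (𝟙_ C ⊗ 𝟙_ C)).inv ▷ (B' ⊗ A)) ≫ ((𝟙_ C ⊗ (𝟙_ C ⊗ 𝟙_ C)) ◁ ((g ⊗ₘ f : B' ⊗ A ⟶ A' ⊗ B)))) := by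
      simp only [compRep, tensorRep, iotaRep, idRep, dualRep, capRep, tensorμ,
        tensorHom_def',
        BraidedCategory.braiding_tensor_left_hom, BraidedCategory.braiding_tensor_right_hom,
        braiding_tensorUnit_left, braiding_tensorUnit_right]
      monoidal
    have h1 : LearnEquiv (compRep (tensorRep (dualRep (iotaRep f g)) (idRep A A')) (capRep A A'))
        ⟨𝟙_ C ⊗ (𝟙_ C ⊗ 𝟙_ C), (B' ⊗ A) ⊗ (𝟙_ C ⊗ 𝟙_ C), (((λ_ (𝟙_ C ⊗ 𝟙_ C)).hom ▷ (B' ⊗ A)) ≫ (β_ (𝟙_ C ⊗ 𝟙_ C) (B' ⊗ A)).hom ≫ (ρ_ ((B' ⊗ A) ⊗ (𝟙_ C ⊗ 𝟙_ C))).inv),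
          ((((g ▷ A) ▷ (𝟙_ C ⊗ 𝟙_ C)) ▷ 𝟙_ C)) ≫ (compRep (tensorRep (dualRep (iotaRep f g)) (idRep A A')) (capRep A A')).r⟩ :=
      learnEquiv_slide_right _ _ _ hl1
    have h2 : LearnEquiv (compRep (tensorRep (idRep B' B) (iotaRep f g)) (capRep B B'))
        ⟨𝟙_ C ⊗ (𝟙_ C ⊗ 𝟙_ C), (B' ⊗ A) ⊗ (𝟙_ C ⊗ 𝟙_ C), (((λ_ (𝟙_ C ⊗ 𝟙_ C)).hom ▷ (B' ⊗ A)) ≫ (β_ (𝟙_ C ⊗ 𝟙_ C) (B' ⊗ A)).hom ≫ (ρ_ ((B' ⊗ A) ⊗ (𝟙_ C ⊗ 𝟙_ C))).inv),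
          ((((B' ◁ f) ▷ (𝟙_ C ⊗ 𝟙_ C)) ▷ 𝟙_ C)) ≫ (compRep (tensorRep (idRep B' B) (iotaRep f g)) (capRep B B')).r⟩ :=
      learnEquiv_slide_right _ _ _ hl2
    erw [hr1] at h1
    erw [hr2] at h2
    exact Relation.EqvGen.trans _ _ _ h1 (Relation.EqvGen.symm _ _ h2)
end

section
/- Every learner (l | r) : (S, S') ⇸ (A, A') with representative l : P ⊗ S → Q ⊗ A, r : Q ⊗ A' → P ⊗ S' decomposes canonically as a composite built from the cup η, the images under ι of l and r, and the cap ε; that is, (l | r) equals the composite (up to structural isomorphisms) (id ⊗ η) ; (ι(l, r) ⊗ id) ; (id ⊗ ε) in Learn_C. -/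
open CategoryTheory MonoidalCategory

universe v u

variable {C : Type u} [Category.{v} C] [MonoidalCategory C]

variable [SymmetricCategory C]

section Aux

theorem learn_equiv_isoP {A A' B B' P₁ P₂ Q : C} (e : P₁ ≅ P₂)
    (l : P₂ ⊗ A ⟶ Q ⊗ B) (r : Q ⊗ B' ⟶ P₂ ⊗ A') :
    LearnEquiv (⟨P₂, Q, l, r⟩ : LearnerRep C A A' B B')
      ⟨P₁, Q, (e.hom ▷ A) ≫ l, r ≫ (e.inv ▷ A')⟩ := by
  have h := Relation.EqvGen.rel _ _
    (LearnStep.slideP (A := A) (B := B) e.hom l (r ≫ (e.inv ▷ A')))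
  have h2 : (r ≫ (e.inv ▷ A')) ≫ (e.hom ▷ A') = r := by
    rw [Category.assoc, ← comp_whiskerRight, e.inv_hom_id]
    simp
  rw [h2] at h
  exact Relation.EqvGen.symm _ _ h

theorem learn_equiv_isoQ {A A' B B' P Q₁ Q₂ : C} (e : Q₁ ≅ Q₂)
    (l : P ⊗ A ⟶ Q₂ ⊗ B) (r : Q₂ ⊗ B' ⟶ P ⊗ A') :
    LearnEquiv (⟨P, Q₂, l, r⟩ : LearnerRep C A A' B B')
      ⟨P, Q₁, l ≫ (e.inv ▷ B), (e.hom ▷ B') ≫ r⟩ := by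
  have h := Relation.EqvGen.rel _ _
    (LearnStep.slideQ (A := A) (B := B) e.hom (l ≫ (e.inv ▷ B)) r)
  have h2 : (l ≫ (e.inv ▷ B)) ≫ (e.hom ▷ B) = l := by
    rw [Category.assoc, ← comp_whiskerRight, e.inv_hom_id]
    simp
  rw [h2] at h
  exact h

theorem learn_equiv_conj {A A' B B' : C} (g : LearnerRep C A A' B B')
    {P Q : C} (eP : P ≅ g.P) (eQ : Q ≅ g.Q)
    (l : P ⊗ A ⟶ Q ⊗ B) (r : Q ⊗ B' ⟶ P ⊗ A')
    (hl : l = (eP.hom ▷ A) ≫ g.l ≫ (eQ.inv ▷ B))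
    (hr : r = (eQ.hom ▷ B') ≫ g.r ≫ (eP.inv ▷ A')) :
    LearnEquiv g ⟨P, Q, l, r⟩ := by
  subst hl hr
  have h1 := learn_equiv_isoP eP g.l g.r
  have h2 := learn_equiv_isoQ eQ ((eP.hom ▷ A) ≫ g.l) (g.r ≫ (eP.inv ▷ A'))
  rw [Category.assoc] at h2
  exact Relation.EqvGen.trans _ _ _ h1 h2

set_option maxHeartbeats 1600000 in
/-- The structural isomorphism for the parameter object `P` of the decomposition. -/
def ePiso (X : C) : (𝟙_ C ⊗ (𝟙_ C ⊗ 𝟙_ C) ⊗ 𝟙_ C ⊗ ((X ⊗ 𝟙_ C) ⊗ 𝟙_ C) ⊗ 𝟙_ C) ≅ X :=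
  λ_ _ ≪≫ whiskerRightIso (λ_ (𝟙_ C)) _ ≪≫ λ_ _ ≪≫ λ_ _ ≪≫ ρ_ _ ≪≫ ρ_ _ ≪≫ ρ_ _

set_option maxHeartbeats 1600000 in
/-- The structural isomorphism for the parameter object `Q` of the decomposition. -/
def eQiso (X : C) : (𝟙_ C ⊗ (𝟙_ C ⊗ 𝟙_ C ⊗ X) ⊗ 𝟙_ C ⊗ (𝟙_ C ⊗ 𝟙_ C) ⊗ 𝟙_ C) ≅ X :=
  λ_ _ ≪≫ whiskerLeftIso _ (λ_ _ ≪≫ ρ_ _ ≪≫ λ_ _) ≪≫ ρ_ _ ≪≫ λ_ _ ≪≫ λ_ _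

end Aux

/-- Every learner `(l ∣ r) : (S, S') ⇸ (A, A')` decomposes canonically as a
composite, up to structural isomorphisms, of the cup `η`, the image under `ι`
of its two components, and the cap `ε`. -/
theorem learner_decomposition (C : Type u) [Category.{v} C]
    [MonoidalCategory C] [SymmetricCategory C]
    {S S' A A' : C} (f : LearnerRep C S S' A A') :
    LearnEquiv f
      (compRep (compRep (compRep (compRep
        (iotaRep (λ_ S).inv (ρ_ S').hom)
        (tensorRep (cupRep f.P (𝟙_ C)) (idRep S S')))
        (iotaRep
          (((ρ_ f.P).hom ▷ S) ≫ f.l ≫ (β_ f.Q A).hom ≫ (A ◁ (λ_ f.Q).inv))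
          (((λ_ f.Q).hom ▷ A') ≫ f.r ≫ (β_ f.P S').hom ≫ (S' ◁ (ρ_ f.P).inv))))
        (tensorRep (idRep A A') (capRep f.Q (𝟙_ C))))
        (iotaRep (ρ_ A).hom (λ_ A').inv)) := by
  have hl : (compRep (compRep (compRep (compRep
        (iotaRep (λ_ S).inv (ρ_ S').hom)
        (tensorRep (cupRep f.P (𝟙_ C)) (idRep S S')))
        (iotaRep
          (((ρ_ f.P).hom ▷ S) ≫ f.l ≫ (β_ f.Q A).hom ≫ (A ◁ (λ_ f.Q).inv))
          (((λ_ f.Q).hom ▷ A') ≫ f.r ≫ (β_ f.P S').hom ≫ (S' ◁ (ρ_ f.P).inv))))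
        (tensorRep (idRep A A') (capRep f.Q (𝟙_ C))))
        (iotaRep (ρ_ A).hom (λ_ A').inv)).l = ((ePiso f.P).hom ▷ S) ≫ f.l ≫ ((eQiso f.Q).inv ▷ A) := by
    have h : (compRep (compRep (compRep (compRep
        (iotaRep (λ_ S).inv (ρ_ S').hom)
        (tensorRep (cupRep f.P (𝟙_ C)) (idRep S S')))
        (iotaRep
          (((ρ_ f.P).hom ▷ S) ≫ f.l ≫ (β_ f.Q A).hom ≫ (A ◁ (λ_ f.Q).inv))
          (((λ_ f.Q).hom ▷ A') ≫ f.r ≫ (β_ f.P S').hom ≫ (S' ◁ (ρ_ f.P).inv))))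
        (tensorRep (idRep A A') (capRep f.Q (𝟙_ C))))
        (iotaRep (ρ_ A).hom (λ_ A').inv)).l = ((ePiso f.P).hom ▷ S) ≫ f.l ≫ (β_ f.Q A).hom ≫ (β_ A f.Q).hom ≫
        ((eQiso f.Q).inv ▷ A) := by
      simp only [compRep, tensorRep, iotaRep, idRep, cupRep, capRep, tensorμ, ePiso, eQiso]
      simp only [BraidedCategory.braiding_tensor_left_hom, BraidedCategory.braiding_tensor_right_hom,
        braiding_tensorUnit_left, braiding_tensorUnit_right, MonoidalCategory.tensorHom_def, Iso.trans_hom,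
        Iso.trans_inv, whiskerRightIso_hom, whiskerRightIso_inv, whiskerLeftIso_hom,
        whiskerLeftIso_inv, Iso.symm_hom, Iso.symm_inv]
      monoidal
    rw [h, SymmetricCategory.symmetry_assoc]
  have hr : (compRep (compRep (compRep (compRep
        (iotaRep (λ_ S).inv (ρ_ S').hom)
        (tensorRep (cupRep f.P (𝟙_ C)) (idRep S S')))
        (iotaRep
          (((ρ_ f.P).hom ▷ S) ≫ f.l ≫ (β_ f.Q A).hom ≫ (A ◁ (λ_ f.Q).inv))
          (((λ_ f.Q).hom ▷ A') ≫ f.r ≫ (β_ f.P S').hom ≫ (S' ◁ (ρ_ f.P).inv))))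
        (tensorRep (idRep A A') (capRep f.Q (𝟙_ C))))
        (iotaRep (ρ_ A).hom (λ_ A').inv)).r = ((eQiso f.Q).hom ▷ A') ≫ f.r ≫ ((ePiso f.P).inv ▷ S') := by
    have h : (compRep (compRep (compRep (compRep
        (iotaRep (λ_ S).inv (ρ_ S').hom)
        (tensorRep (cupRep f.P (𝟙_ C)) (idRep S S')))
        (iotaRep
          (((ρ_ f.P).hom ▷ S) ≫ f.l ≫ (β_ f.Q A).hom ≫ (A ◁ (λ_ f.Q).inv))
          (((λ_ f.Q).hom ▷ A') ≫ f.r ≫ (β_ f.P S').hom ≫ (S' ◁ (ρ_ f.P).inv))))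
        (tensorRep (idRep A A') (capRep f.Q (𝟙_ C))))
        (iotaRep (ρ_ A).hom (λ_ A').inv)).r = ((eQiso f.Q).hom ▷ A') ≫ f.r ≫ (β_ f.P S').hom ≫ (β_ S' f.P).hom ≫
        ((ePiso f.P).inv ▷ S') := by
      simp only [compRep, tensorRep, iotaRep, idRep, cupRep, capRep, tensorμ, ePiso, eQiso]
      simp only [BraidedCategory.braiding_tensor_left_hom, BraidedCategory.braiding_tensor_right_hom,
        braiding_tensorUnit_left, braiding_tensorUnit_right, MonoidalCategory.tensorHom_def, Iso.trans_hom,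
        Iso.trans_inv, whiskerRightIso_hom, whiskerRightIso_inv, whiskerLeftIso_hom,
        whiskerLeftIso_inv, Iso.symm_hom, Iso.symm_inv]
      monoidal
    rw [h, SymmetricCategory.symmetry_assoc]
  exact learn_equiv_conj f (ePiso f.P) (eQiso f.Q) _ _ hl hr
end

section
/- In Set, the snake composite for an object of the form (A, 1) in Learn_Set, namely (A,1) ⇸ (A,1) ⊗ ((A,1)* ⊗ (A,1)) ⇸ ((A,1) ⊗ (A,1)*) ⊗ (A,1) ⇸ (A,1) built from cup and cap, is the learner with parameter set A, implement function I(p, a) = p and update function U(p, a) = a ('delay one step'); this learner is not extensionally equal to the identity learner whenever A has at least two elements. -/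
open CategoryTheory MonoidalCategory

universe v u

variable {C : Type u} [Category.{v} C] [MonoidalCategory C]

variable [SymmetricCategory C]

/-- The `delay one step' learner on `(A, 1)` in `Learn_Set`: parameter set `A`,
implement `I (p, a) = p` and update `U (p, a) = a`, i.e. left component the
swap `A × A → A × A` and right component the identity. -/
def delayRep (A : Type u) :
    LearnerRep (Type u) A (𝟙_ (Type u)) A (𝟙_ (Type u)) :=
  ⟨A, A, (β_ A A).hom, 𝟙 (A ⊗ 𝟙_ (Type u))⟩

section Aux

/-- Transporting a learner representative along isomorphisms of its parameter
objects gives an equivalent representative. -/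
theorem learnEquiv_of_iso_s12 {A A' B B' : C} (f : LearnerRep C A A' B B')
    {P' Q' : C} (eP : f.P ≅ P') (eQ : f.Q ≅ Q') :
    LearnEquiv f ⟨P', Q', (eP.inv ▷ A) ≫ f.l ≫ (eQ.hom ▷ B),
      (eQ.inv ▷ B') ≫ f.r ≫ (eP.hom ▷ A')⟩ := by
  obtain ⟨P, Q, l, r⟩ := f
  dsimp at eP eQ ⊢
  have h1 : LearnStep (⟨P, Q, l, r⟩ : LearnerRep C A A' B B')
      ⟨P', Q, (eP.inv ▷ A) ≫ l, r ≫ (eP.hom ▷ A')⟩ := by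
    have := LearnStep.slideP (A := A) (A' := A') (B := B) (B' := B')
      eP.hom ((eP.inv ▷ A) ≫ l) r
    have hl : (eP.hom ▷ A) ≫ (eP.inv ▷ A) ≫ l = l := by
      rw [← Category.assoc, ← comp_whiskerRight, Iso.hom_inv_id, id_whiskerRight,
        Category.id_comp]
    rwa [hl] at this
  have h2 : LearnStep
      (⟨P', Q', ((eP.inv ▷ A) ≫ l) ≫ (eQ.hom ▷ B),
        (eQ.inv ▷ B') ≫ r ≫ (eP.hom ▷ A')⟩ : LearnerRep C A A' B B')
      ⟨P', Q, (eP.inv ▷ A) ≫ l, r ≫ (eP.hom ▷ A')⟩ := by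
    have := LearnStep.slideQ (A := A) (A' := A') (B := B) (B' := B')
      eQ.hom ((eP.inv ▷ A) ≫ l) ((eQ.inv ▷ B') ≫ r ≫ (eP.hom ▷ A'))
    have hr : (eQ.hom ▷ B') ≫ (eQ.inv ▷ B') ≫ r ≫ (eP.hom ▷ A') = r ≫ (eP.hom ▷ A') := by
      rw [← Category.assoc, ← comp_whiskerRight, Iso.hom_inv_id, id_whiskerRight,
        Category.id_comp]
    rwa [hr] at this
  have h2' : LearnStep
      (⟨P', Q', (eP.inv ▷ A) ≫ l ≫ (eQ.hom ▷ B),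
        (eQ.inv ▷ B') ≫ r ≫ (eP.hom ▷ A')⟩ : LearnerRep C A A' B B')
      ⟨P', Q, (eP.inv ▷ A) ≫ l, r ≫ (eP.hom ▷ A')⟩ := by
    simpa only [Category.assoc] using h2
  exact Relation.EqvGen.trans _ _ _ (Relation.EqvGen.rel _ _ h1)
    (Relation.EqvGen.symm _ _ (Relation.EqvGen.rel _ _ h2'))

/-- The one-step dynamics of a learner `(A,1) ⇸ (A,1)` in `Learn_Set`:
next parameter (implement then update) and output. -/
def stepK {A : Type u} (f : LearnerRep (Type u) A (𝟙_ (Type u)) A (𝟙_ (Type u))) :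
    f.P × A → f.P × A :=
  fun x => ((f.r ((f.l x).1, PUnit.unit)).1, (f.l x).2)

/-- Parameters reachable in `n` steps from an arbitrary start. -/
def reach {P A : Type u} (k : P × A → P × A) : ℕ → Set P
  | 0 => Set.univ
  | n + 1 => {t | ∃ s ∈ reach k n, ∃ a, t = (k (s, a)).1}

/-- The eventual behaviours of a learner: the input-output functions occurring
at parameters reachable after arbitrarily many steps. -/
def Beh {A : Type u} (f : LearnerRep (Type u) A (𝟙_ (Type u)) A (𝟙_ (Type u))) :
    Set (A → A) :=
  ⋂ n, {g | ∃ s ∈ reach (stepK f) n, g = fun a => (stepK f (s, a)).2}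

theorem beh_eq_of_conj {P₁ P₂ A : Type u} (p : P₁ → P₂) (m : P₂ × A → P₁ × A)
    (k₁ : P₁ × A → P₁ × A) (k₂ : P₂ × A → P₂ × A)
    (h₁ : ∀ x, k₁ x = m (p x.1, x.2))
    (h₂ : ∀ y, k₂ y = (p (m y).1, (m y).2)) :
    (⋂ n, {g : A → A | ∃ s ∈ reach k₁ n, g = fun a => (k₁ (s, a)).2}) =
    (⋂ n, {g : A → A | ∃ s ∈ reach k₂ n, g = fun a => (k₂ (s, a)).2}) := by
  have hbe : ∀ s a, (k₁ (s, a)).2 = (k₂ (p s, a)).2 := by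
    intro s a; rw [h₁ (s, a), h₂ (p s, a)]
  have hre : ∀ n s, s ∈ reach k₁ n → p s ∈ reach k₂ n := by
    intro n
    induction n with
    | zero => intro s _; trivial
    | succ n ih =>
      rintro s' ⟨s, hs, a, rfl⟩
      refine ⟨p s, ih s hs, a, ?_⟩
      rw [h₁ (s, a), h₂ (p s, a)]
  have hre2 : ∀ n t, t ∈ reach k₂ (n + 1) → ∃ s ∈ reach k₁ n, t = p s := by
    intro n
    induction n with
    | zero =>
      rintro t ⟨t₀, -, a, rfl⟩
      exact ⟨(m (t₀, a)).1, trivial, by rw [h₂ (t₀, a)]⟩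
    | succ n ih =>
      rintro t ⟨t', ht', a, rfl⟩
      obtain ⟨s', hs', rfl⟩ := ih t' ht'
      refine ⟨(k₁ (s', a)).1, ⟨s', hs', a, rfl⟩, ?_⟩
      rw [h₁ (s', a), h₂ (p s', a)]
  apply Set.Subset.antisymm
  · intro g hg
    refine Set.mem_iInter.2 fun n => ?_
    obtain ⟨s, hs, rfl⟩ := Set.mem_iInter.1 hg n
    exact ⟨p s, hre n s hs, funext fun a => hbe s a⟩
  · intro g hg
    refine Set.mem_iInter.2 fun n => ?_
    obtain ⟨t, ht, rfl⟩ := Set.mem_iInter.1 hg (n + 1)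
    obtain ⟨s, hs, rfl⟩ := hre2 n t ht
    exact ⟨s, hs, funext fun a => (hbe s a).symm⟩

theorem beh_eq_of_step {A : Type u}
    {f g : LearnerRep (Type u) A (𝟙_ (Type u)) A (𝟙_ (Type u))}
    (h : LearnStep f g) : Beh f = Beh g := by
  cases h with
  | slideP p l r =>
    exact beh_eq_of_conj p
      (fun y => ((r ((l y).1, PUnit.unit)).1, (l y).2)) _ _
      (fun x => rfl) (fun y => rfl)
  | slideQ q l r =>
    have hk : stepK (A := A) ⟨_, _, l ≫ (q ▷ A), r⟩ =
        stepK (A := A) ⟨_, _, l, (q ▷ (𝟙_ (Type u))) ≫ r⟩ := rfl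
    simp only [Beh, hk]

theorem beh_eq_of_learnEquiv {A : Type u}
    {f g : LearnerRep (Type u) A (𝟙_ (Type u)) A (𝟙_ (Type u))}
    (h : LearnEquiv f g) : Beh f = Beh g := by
  induction h with
  | rel _ _ h => exact beh_eq_of_step h
  | refl => rfl
  | symm _ _ _ ih => exact ih.symm
  | trans _ _ _ _ _ ih1 ih2 => exact ih1.trans ih2

end Aux

/-- In `Learn_Set`, the snake composite on an object `(A, 1)` is the `delay'
learner with parameter set `A`, `I (p, a) = p`, `U (p, a) = a`; and this
learner is not (extensionally) equal to the identity learner whenever `A` has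
at least two elements. -/
theorem snake_is_delay_and_not_identity (A : Type u) :
    LearnEquiv (snakeRep A (𝟙_ (Type u))) (delayRep A) ∧
    (∀ p a : A, (delayRep A).l (p, a) = (a, p)) ∧
    ((∃ a b : A, a ≠ b) →
      ¬ LearnEquiv (delayRep A) (idRep A (𝟙_ (Type u)))) := by
  refine ⟨?_, fun p a => rfl, ?_⟩
  · -- the snake composite is the delay learner
    let eP : (snakeRep A (𝟙_ (Type u))).P ≃ A :=
      { toFun := fun x => x.2.2.2.1.1.1
        invFun := fun a => ⟨⟨⟩, ⟨⟨⟩, ⟨⟩⟩, ⟨⟩, ⟨⟨a, ⟨⟩⟩, ⟨⟩⟩, ⟨⟩⟩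
        left_inv := by rintro ⟨⟨⟩, ⟨⟨⟩, ⟨⟩⟩, ⟨⟩, ⟨⟨a, ⟨⟩⟩, ⟨⟩⟩, ⟨⟩⟩; rfl
        right_inv := fun a => rfl }
    let eQ : (snakeRep A (𝟙_ (Type u))).Q ≃ A :=
      { toFun := fun x => x.2.1.2.2
        invFun := fun a => ⟨⟨⟩, ⟨⟨⟩, ⟨⟩, a⟩, ⟨⟩, ⟨⟨⟩, ⟨⟩⟩, ⟨⟩⟩
        left_inv := by rintro ⟨⟨⟩, ⟨⟨⟩, ⟨⟩, a⟩, ⟨⟩, ⟨⟨⟩, ⟨⟩⟩, ⟨⟩⟩; rfl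
        right_inv := fun a => rfl }
    have h := learnEquiv_of_iso_s12 (snakeRep A (𝟙_ (Type u))) eP.toIso eQ.toIso
    have hl : (eP.toIso.inv ▷ A) ≫ (snakeRep A (𝟙_ (Type u))).l ≫ (eQ.toIso.hom ▷ A) =
        (β_ A A).hom := by
      ext x <;> rfl
    have hr : (eQ.toIso.inv ▷ (𝟙_ (Type u))) ≫ (snakeRep A (𝟙_ (Type u))).r ≫
        (eP.toIso.hom ▷ (𝟙_ (Type u))) = 𝟙 (A ⊗ 𝟙_ (Type u)) := by
      ext x
      obtain ⟨a, ⟨⟩⟩ := x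
      rfl
    rw [hl, hr] at h
    exact h
  · -- the delay learner is not the identity learner
    rintro ⟨a, b, hab⟩ h
    have hB := beh_eq_of_learnEquiv h
    -- the identity function is an eventual behaviour of the identity learner
    have hid : (fun x : A => x) ∈ Beh (idRep A (𝟙_ (Type u))) := by
      refine Set.mem_iInter.2 fun n => ?_
      refine ⟨PUnit.unit, ?_, rfl⟩
      induction n with
      | zero => trivial
      | succ n ih => exact ⟨PUnit.unit, ih, a, rfl⟩
    rw [← hB] at hid
    -- but every eventual behaviour of the delay learner is constant
    obtain ⟨s, -, hs⟩ := Set.mem_iInter.1 hid 0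
    have ha : a = s := congrFun hs a
    have hb : b = s := congrFun hs b
    exact hab (ha.trans hb.symm)
end

section
/- In Atemp_C, every object (A, A') is isomorphic to (ι A')* ⊗ (ι A), i.e., to (A', I)* ⊗ (A, I), where ι : C → Atemp_C sends A to (A, I). -/
open CategoryTheory MonoidalCategory

universe v u

variable {C : Type u} [Category.{v} C] [MonoidalCategory C]

variable [SymmetricCategory C]

section AuxDecomp

variable {A A' B B' : C}

omit [SymmetricCategory C] in
lemma learnEquiv_reparamP {P₁ P₂ Q : C} (p : P₁ ≅ P₂) (l : P₁ ⊗ A ⟶ Q ⊗ B)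
    (r : Q ⊗ B' ⟶ P₁ ⊗ A') :
    LearnEquiv (⟨P₁, Q, l, r⟩ : LearnerRep C A A' B B')
      ⟨P₂, Q, (p.inv ▷ A) ≫ l, r ≫ (p.hom ▷ A')⟩ := by
  have h := Relation.EqvGen.rel _ _ (LearnStep.slideP (A := A) p.hom ((p.inv ▷ A) ≫ l) r)
  have e : (p.hom ▷ A) ≫ (p.inv ▷ A) ≫ l = l := by
    rw [← comp_whiskerRight_assoc, Iso.hom_inv_id, id_whiskerRight, Category.id_comp]
  rwa [e] at h

omit [SymmetricCategory C] in
lemma learnEquiv_reparamQ {P Q₁ Q₂ : C} (q : Q₁ ≅ Q₂) (l : P ⊗ A ⟶ Q₁ ⊗ B)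
    (r : Q₁ ⊗ B' ⟶ P ⊗ A') :
    LearnEquiv (⟨P, Q₁, l, r⟩ : LearnerRep C A A' B B')
      ⟨P, Q₂, l ≫ (q.hom ▷ B), (q.inv ▷ B') ≫ r⟩ := by
  have h := Relation.EqvGen.rel _ _ (LearnStep.slideQ (B := B) q.hom l ((q.inv ▷ B') ≫ r))
  have e : (q.hom ▷ B') ≫ (q.inv ▷ B') ≫ r = r := by
    rw [← comp_whiskerRight_assoc, Iso.hom_inv_id, id_whiskerRight, Category.id_comp]
  rw [e] at h
  exact Relation.EqvGen.symm _ _ h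

omit [SymmetricCategory C] in
lemma learnEquiv_shrink {P Q : C} (eP : P ≅ 𝟙_ C) (eQ : Q ≅ 𝟙_ C)
    (l : P ⊗ A ⟶ Q ⊗ B) (r : Q ⊗ B' ⟶ P ⊗ A')
    (l' : 𝟙_ C ⊗ A ⟶ 𝟙_ C ⊗ B) (r' : 𝟙_ C ⊗ B' ⟶ 𝟙_ C ⊗ A')
    (hl : (eP.inv ▷ A) ≫ l ≫ (eQ.hom ▷ B) = l')
    (hr : (eQ.inv ▷ B') ≫ r ≫ (eP.hom ▷ A') = r') :
    LearnEquiv (⟨P, Q, l, r⟩ : LearnerRep C A A' B B') ⟨𝟙_ C, 𝟙_ C, l', r'⟩ := by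
  subst hl hr
  refine Relation.EqvGen.trans _ _ _ (learnEquiv_reparamP eP l r) ?_
  simpa [Category.assoc, LearnEquiv] using
    learnEquiv_reparamQ eQ ((eP.inv ▷ A) ≫ l) (r ≫ (eP.hom ▷ A'))

end AuxDecomp

set_option maxHeartbeats 1000000 in
/-- In `Atemp_C`, every object `(A, A')` is isomorphic to
`(ι A')* ⊗ ι A = (A', I)* ⊗ (A, I) = (I ⊗ A, I ⊗ A')`. -/
theorem atemp_object_decomposition (C : Type u) [Category.{v} C]
    [MonoidalCategory C] [SymmetricCategory C] (A A' : C) :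
    ∃ (u : LearnerRep C A A' (𝟙_ C ⊗ A) (𝟙_ C ⊗ A'))
      (v : LearnerRep C (𝟙_ C ⊗ A) (𝟙_ C ⊗ A') A A'),
      AtempRel (compRep u v) (idRep A A') ∧
      AtempRel (compRep v u) (idRep (𝟙_ C ⊗ A) (𝟙_ C ⊗ A')) := by
  refine ⟨iotaRep (λ_ A).inv (λ_ A').hom, iotaRep (λ_ A).hom (λ_ A').inv,
    AtempRel.of ?_, AtempRel.of ?_⟩
  · exact learnEquiv_shrink (λ_ (𝟙_ C)) (λ_ (𝟙_ C)) _ _ _ _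
      (by simp [compRep, iotaRep, braiding_tensorUnit_left]) 
      (by simp [compRep, iotaRep, braiding_tensorUnit_left])
  · exact learnEquiv_shrink (λ_ (𝟙_ C)) (λ_ (𝟙_ C)) _ _ _ _
      (by simp [compRep, iotaRep, braiding_tensorUnit_left]) 
      (by simp [compRep, iotaRep, braiding_tensorUnit_left])
end

section
/- Any monoidal natural transformation α : F → G between monoidal functors F, G : D → E with D and E compact closed is invertible, with inverse at each object A given by the composite G A → (G(A*))* → (via (α_{A*})*) (F(A*))* → F A, using the canonical isomorphisms X ≅ X** and the compatibility of monoidal functors with duals. -/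
open CategoryTheory MonoidalCategory

universe v₁ u₁ v₂ u₂

section AuxLemmas

open Functor.LaxMonoidal Functor.OplaxMonoidal

variable {C : Type*} {E : Type*} [Category C] [Category E] [MonoidalCategory C]
  [MonoidalCategory E]

/-- If `f` and `g` intertwine two "duality data" (coevaluation/evaluation pairs each
satisfying one zigzag identity), then `f` is an isomorphism. -/
lemma isIso_of_zigzag_compat {X₁ Y₁ X₂ Y₂ : E} (f : X₁ ⟶ X₂) (g : Y₁ ⟶ Y₂)
    (c₁ : 𝟙_ E ⟶ X₁ ⊗ Y₁) (e₁ : Y₁ ⊗ X₁ ⟶ 𝟙_ E)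
    (c₂ : 𝟙_ E ⟶ X₂ ⊗ Y₂) (e₂ : Y₂ ⊗ X₂ ⟶ 𝟙_ E)
    (zig₁ : c₁ ▷ X₁ ≫ (α_ _ _ _).hom ≫ X₁ ◁ e₁ = (λ_ X₁).hom ≫ (ρ_ X₁).inv)
    (zig₂ : c₂ ▷ X₂ ≫ (α_ _ _ _).hom ≫ X₂ ◁ e₂ = (λ_ X₂).hom ≫ (ρ_ X₂).inv)
    (h1 : c₁ ≫ (f ⊗ₘ g) = c₂) (h2 : (g ⊗ₘ f) ≫ e₂ = e₁) : IsIso f := by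
  refine ⟨(λ_ X₂).inv ≫ (c₁ ▷ X₂) ≫ (α_ _ _ _).hom ≫ (X₁ ◁ (g ▷ X₂)) ≫
      (X₁ ◁ e₂) ≫ (ρ_ X₁).hom, ?_, ?_⟩
  · have : f ≫ (λ_ X₂).inv = (λ_ X₁).inv ≫ (𝟙_ E ◁ f) := by simp
    rw [reassoc_of% this]
    have : (𝟙_ E ◁ f) ≫ (c₁ ▷ X₂) = (c₁ ▷ X₁) ≫ ((X₁ ⊗ Y₁) ◁ f) := by
      rw [← whisker_exchange]
    rw [reassoc_of% this]
    have : ((X₁ ⊗ Y₁) ◁ f) ≫ (α_ _ _ _).hom = (α_ _ _ _).hom ≫ (X₁ ◁ (Y₁ ◁ f)) := by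
      simp
    rw [reassoc_of% this]
    have : (X₁ ◁ (Y₁ ◁ f)) ≫ (X₁ ◁ (g ▷ X₂)) ≫ (X₁ ◁ e₂) = X₁ ◁ e₁ := by
      rw [← MonoidalCategory.whiskerLeft_comp, ← MonoidalCategory.whiskerLeft_comp,
        ← tensorHom_def'_assoc, h2]
    rw [reassoc_of% this]
    rw [reassoc_of% zig₁]
    simp
  · have hρ : (ρ_ X₁).hom ≫ f = (f ▷ 𝟙_ E) ≫ (ρ_ X₂).hom := by simp
    rw [Category.assoc, Category.assoc, Category.assoc, Category.assoc, Category.assoc, hρ]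
    have : (X₁ ◁ e₂) ≫ (f ▷ 𝟙_ E) = (f ▷ (Y₂ ⊗ X₂)) ≫ (X₂ ◁ e₂) := by
      rw [whisker_exchange]
    rw [reassoc_of% this]
    have : (X₁ ◁ (g ▷ X₂)) ≫ (f ▷ (Y₂ ⊗ X₂)) = (f ▷ (Y₁ ⊗ X₂)) ≫ (X₂ ◁ (g ▷ X₂)) := by
      rw [whisker_exchange]
    rw [reassoc_of% this]
    have : (α_ X₁ Y₁ X₂).hom ≫ (f ▷ (Y₁ ⊗ X₂)) = ((f ▷ Y₁) ▷ X₂) ≫ (α_ _ _ _).hom := by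
      simp
    rw [reassoc_of% this]
    have : (α_ X₂ Y₁ X₂).hom ≫ (X₂ ◁ (g ▷ X₂)) = (((X₂ ◁ g) ▷ X₂)) ≫ (α_ _ _ _).hom := by
      rw [associator_naturality_middle]
    rw [reassoc_of% this]
    have : (c₁ ▷ X₂) ≫ ((f ▷ Y₁) ▷ X₂) ≫ ((X₂ ◁ g) ▷ X₂) = c₂ ▷ X₂ := by
      rw [← comp_whiskerRight, ← comp_whiskerRight, ← MonoidalCategory.tensorHom_def, h1]
    rw [reassoc_of% this, reassoc_of% zig₂]
    simp

/-- A monoidal functor sends the zigzag of an exact pairing to a zigzag. -/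
lemma map_zigzag (F : C ⥤ E) [F.Monoidal] (X Y : C) [ExactPairing X Y] :
    (ε F ≫ F.map (η_ X Y) ≫ δ F X Y) ▷ F.obj X ≫ (α_ _ _ _).hom ≫
      F.obj X ◁ (μ F Y X ≫ F.map (ε_ X Y) ≫ η F) =
    (λ_ (F.obj X)).hom ≫ (ρ_ (F.obj X)).inv := by
  have hA : (α_ (F.obj X) (F.obj Y) (F.obj X)).hom ≫ F.obj X ◁ μ F Y X =
      μ F X Y ▷ F.obj X ≫ μ F (X ⊗ Y) X ≫ F.map (α_ X Y X).hom ≫ δ F X (Y ⊗ X) := by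
    rw [← cancel_mono (μ F X (Y ⊗ X))]
    simp [Functor.LaxMonoidal.associativity]
  rw [comp_whiskerRight, comp_whiskerRight, MonoidalCategory.whiskerLeft_comp,
      MonoidalCategory.whiskerLeft_comp]
  slice_lhs 4 5 => rw [hA]
  slice_lhs 3 4 => rw [← comp_whiskerRight, Functor.Monoidal.δ_μ, id_whiskerRight]
  simp only [Category.id_comp, Category.assoc]
  slice_lhs 2 3 => rw [μ_natural_left]
  slice_lhs 5 6 => rw [δ_natural_right]
  have hL : ε F ▷ F.obj X ≫ μ F (𝟙_ C) X = (λ_ (F.obj X)).hom ≫ F.map (λ_ X).inv := by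
    rw [← left_unitality_inv]; simp
  slice_lhs 1 2 => rw [hL]
  have hR : δ F X (𝟙_ C) ≫ F.obj X ◁ η F = F.map (ρ_ X).hom ≫ (ρ_ (F.obj X)).inv := by
    rw [Functor.OplaxMonoidal.right_unitality (F := F) X]
    simp
  slice_lhs 6 7 => rw [hR]
  have : F.map (λ_ X).inv ≫ F.map (η_ X Y ▷ X) ≫ F.map (α_ X Y X).hom ≫
      F.map (X ◁ ε_ X Y) ≫ F.map (ρ_ X).hom = 𝟙 _ := by
    simp only [← Functor.map_comp]
    rw [ExactPairing.evaluation_coevaluation_assoc]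
    simp
  rw [reassoc_of% this]

variable {F G : C ⥤ E} [F.Monoidal] [G.Monoidal] (α : F ⟶ G) [NatTrans.IsMonoidal α]

lemma monoidal_delta (X Y : C) :
    δ F X Y ≫ (α.app X ⊗ₘ α.app Y) = α.app (X ⊗ Y) ≫ δ G X Y := by
  rw [← cancel_epi (μ F X Y)]
  simp [NatTrans.IsMonoidal.tensor_assoc (τ := α) X Y]

lemma monoidal_eta : α.app (𝟙_ C) ≫ η G = η F := by
  rw [← cancel_epi (ε F), NatTrans.IsMonoidal.unit_assoc (τ := α)]
  simp

lemma coev_compat (X Y : C) [ExactPairing X Y] :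
    (ε F ≫ F.map (η_ X Y) ≫ δ F X Y) ≫ (α.app X ⊗ₘ α.app Y) =
      ε G ≫ G.map (η_ X Y) ≫ δ G X Y := by
  rw [Category.assoc, Category.assoc, monoidal_delta α X Y, α.naturality_assoc,
    NatTrans.IsMonoidal.unit_assoc (τ := α)]

lemma ev_compat (X Y : C) [ExactPairing X Y] :
    (α.app Y ⊗ₘ α.app X) ≫ (μ G Y X ≫ G.map (ε_ X Y) ≫ η G) =
      μ F Y X ≫ F.map (ε_ X Y) ≫ η F := by
  rw [← NatTrans.IsMonoidal.tensor_assoc (τ := α) Y X, ← α.naturality_assoc,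
    monoidal_eta α]

end AuxLemmas

/-- Any monoidal natural transformation between monoidal functors whose source
and target are compact closed categories is invertible. -/
theorem monoidalNatTrans_isIso
    (D : Type u₁) [Category.{v₁} D] [MonoidalCategory D] [SymmetricCategory D]
    [RigidCategory D]
    (E : Type u₂) [Category.{v₂} E] [MonoidalCategory E] [SymmetricCategory E]
    [RigidCategory E]
    (F G : D ⥤ E) [F.Monoidal] [G.Monoidal]
    (α : F ⟶ G) [NatTrans.IsMonoidal α] : IsIso α := by
  have : ∀ A : D, IsIso (α.app A) := fun A =>
    isIso_of_zigzag_compat (α.app A) (α.app (Aᘁ))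
      _ _ _ _ (map_zigzag F A (Aᘁ)) (map_zigzag G A (Aᘁ))
      (coev_compat α A (Aᘁ)) (ev_compat α A (Aᘁ))
  exact NatIso.isIso_of_isIso_app α
end
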